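/- arXiv:2510.23841 — 6 statements merged into one kernel-verified Lean document; each statement's English description precedes it below -/
import Mathlib

section
/- Let G be a finite group with cs(G) = {1, p, p^a, p^b}, where p is a prime and a, b are integers with a ≥ 2, b ≥ 2 and a ≠ b. Then G is an internal direct product G = P × A, where P is a Sylow p-subgroup of G and A is abelian. -/
/-- The set of conjugacy class sizes of a group `G`. -/
def csSet (G : Type*) [Group G] : Set ℕ :=
  {n | ∃ g : G, n = (Subgroup.centralizer {g} : Subgroup G).index}

/-- A finite group is not the union of conjugates of a proper subgroup. -/
private lemma union_conj_eq_top {G : Type*} [Group G] [Finite G] (H : Subgroup G)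
    (h : ∀ g : G, ∃ c : G, c⁻¹ * g * c ∈ H) : H = ⊤ := by
  classical
  cases nonempty_fintype G
  letI : Fintype (G ⧸ H) := Fintype.ofFinite _
  letI : Fintype H := Fintype.ofFinite _
  set u : G ⧸ H → Finset G := fun q =>
    ((Finset.univ : Finset H).image (fun h : H => q.out * (h : G) * q.out⁻¹)).erase 1 with hu
  have hcover : (Finset.univ : Finset G).erase 1 ⊆ Finset.univ.biUnion u := by
    intro g hg
    have hg1 : g ≠ 1 := (Finset.mem_erase.mp hg).1
    obtain ⟨c, hc⟩ := h g
    refine Finset.mem_biUnion.mpr ⟨QuotientGroup.mk c, Finset.mem_univ _, ?_⟩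
    set d := (QuotientGroup.mk c : G ⧸ H).out with hd
    have hdc : (QuotientGroup.mk d : G ⧸ H) = QuotientGroup.mk c :=
      QuotientGroup.out_eq' _
    have hk : d⁻¹ * c ∈ H := QuotientGroup.eq.mp hdc
    have hmem : (d⁻¹ * c) * (c⁻¹ * g * c) * (d⁻¹ * c)⁻¹ ∈ H :=
      H.mul_mem (H.mul_mem hk hc) (H.inv_mem hk)
    refine Finset.mem_erase.mpr ⟨hg1, Finset.mem_image.mpr
      ⟨⟨_, hmem⟩, Finset.mem_univ _, ?_⟩⟩
    show d * ((d⁻¹ * c) * (c⁻¹ * g * c) * (d⁻¹ * c)⁻¹) * d⁻¹ = g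
    simp [mul_assoc]
  have hcard : Fintype.card G - 1 ≤ Fintype.card (G ⧸ H) * (Fintype.card H - 1) := by
    calc Fintype.card G - 1 = ((Finset.univ : Finset G).erase 1).card := by
          rw [Finset.card_erase_of_mem (Finset.mem_univ 1), Finset.card_univ]
      _ ≤ (Finset.univ.biUnion u).card := Finset.card_le_card hcover
      _ ≤ ∑ q : G ⧸ H, (u q).card := Finset.card_biUnion_le
      _ ≤ ∑ _q : G ⧸ H, (Fintype.card H - 1) := by
          refine Finset.sum_le_sum fun q _ => ?_
          have h1 : (1 : G) ∈ (Finset.univ : Finset H).image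
              (fun h : H => q.out * (h : G) * q.out⁻¹) :=
            Finset.mem_image.mpr ⟨1, Finset.mem_univ _, by simp⟩
          rw [hu, Finset.card_erase_of_mem h1]
          exact Nat.sub_le_sub_right ((Finset.card_image_le).trans (by simp)) 1
      _ = Fintype.card (G ⧸ H) * (Fintype.card H - 1) := by
          simp [Finset.sum_const, Finset.card_univ, Nat.smul_one_eq_cast]
  rw [← Subgroup.index_eq_one]
  have e1 : Nat.card H * H.index = Nat.card G := Subgroup.card_mul_index H
  have e2 : H.index = Fintype.card (G ⧸ H) := by
    rw [Subgroup.index_eq_card, Nat.card_eq_fintype_card]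
  have e3 : Nat.card H = Fintype.card H := Nat.card_eq_fintype_card
  have e4 : Nat.card G = Fintype.card G := Nat.card_eq_fintype_card
  have hH1 : 1 ≤ Fintype.card H := Fintype.card_pos
  have hi1 : 1 ≤ H.index := Nat.one_le_iff_ne_zero.mpr (Subgroup.index_ne_zero_of_finite)
  have hdistrib : H.index * (Fintype.card H - 1) + H.index * 1 = H.index * Fintype.card H := by
    rw [← Nat.mul_add]
    congr 1
    omega
  rw [← e2] at hcard
  have : Fintype.card G = H.index * Fintype.card H := by
    rw [← e4, ← e3, ← e1, Nat.mul_comm]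
  omega

/-- A subgroup of index coprime to `q` contains a full Sylow `q`-subgroup. -/
private lemma sylow_le_of_not_dvd_index {G : Type*} [Group G] [Finite G] {q : ℕ} [Fact q.Prime]
    (H : Subgroup G) (hq : ¬ q ∣ H.index) : ∃ T : Sylow q G, (T : Subgroup G) ≤ H := by
  obtain ⟨R⟩ := (inferInstance : Nonempty (Sylow q H))
  have hR : IsPGroup q ((R : Subgroup H).map H.subtype) := R.2.map _
  obtain ⟨T, hT⟩ := hR.exists_le_sylow
  have hle : ((R : Subgroup H).map H.subtype) ≤ H := by
    rintro x ⟨y, _, rfl⟩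
    exact y.2
  have hGne : Nat.card G ≠ 0 := Nat.card_pos.ne'
  have hHne : Nat.card H ≠ 0 := Nat.card_pos.ne'
  have hIne : H.index ≠ 0 := Subgroup.index_ne_zero_of_finite
  have hfac : (Nat.card G).factorization q = (Nat.card H).factorization q := by
    rw [← Subgroup.card_mul_index H, Nat.factorization_mul hHne hIne, Finsupp.add_apply,
      Nat.factorization_eq_zero_of_not_dvd hq, Nat.add_zero]
  have hcardR : Nat.card ((R : Subgroup H).map H.subtype) = q ^ (Nat.card G).factorization q := by
    rw [← Nat.card_congr (Subgroup.equivMapOfInjective _ _ H.subtype_injective).toEquiv,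
      Sylow.card_eq_multiplicity R, hfac]
  have hcardT : Nat.card (T : Subgroup G) = q ^ (Nat.card G).factorization q :=
    Sylow.card_eq_multiplicity T
  have hset : (((R : Subgroup H).map H.subtype : Subgroup G) : Set G) = ((T : Subgroup G) : Set G) := by
    apply Set.eq_of_subset_of_ncard_le hT
    · rw [← Nat.card_coe_set_eq, ← Nat.card_coe_set_eq]
      show Nat.card (T : Subgroup G) ≤ Nat.card ((R : Subgroup H).map H.subtype)
      rw [hcardR, hcardT]
  refine ⟨T, ?_⟩
  intro x hx
  have : x ∈ (((R : Subgroup H).map H.subtype : Subgroup G) : Set G) := by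
    rw [hset]; exact hx
  exact hle this

/-- Splitting an element into commuting parts of coprime orders. -/
private lemma split_elem {G : Type*} [Group G] (x : G) {d e : ℕ} (hde : Nat.Coprime d e)
    (hx : orderOf x = d * e) :
    ∃ u v : G, x = u * v ∧ u ^ d = 1 ∧ v ^ e = 1 := by
  have hb := Nat.gcd_eq_gcd_ab d e
  rw [hde] at hb
  have hsum : (e : ℤ) * Nat.gcdB d e + (d : ℤ) * Nat.gcdA d e = 1 := by
    push_cast at hb; linarith
  have hxde : x ^ ((d * e : ℕ) : ℤ) = 1 := by
    rw [zpow_natCast, ← hx, pow_orderOf_eq_one]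
  refine ⟨x ^ ((e : ℤ) * Nat.gcdB d e), x ^ ((d : ℤ) * Nat.gcdA d e), ?_, ?_, ?_⟩
  · rw [← zpow_add, hsum, zpow_one]
  · rw [← zpow_natCast (x ^ ((e : ℤ) * Nat.gcdB d e)) d, ← zpow_mul]
    have : (e : ℤ) * Nat.gcdB d e * (d : ℤ) = ((d * e : ℕ) : ℤ) * Nat.gcdB d e := by
      push_cast; ring
    rw [this, zpow_mul, hxde, one_zpow]
  · rw [← zpow_natCast (x ^ ((d : ℤ) * Nat.gcdA d e)) e, ← zpow_mul]
    have : (d : ℤ) * Nat.gcdA d e * (e : ℤ) = ((d * e : ℕ) : ℤ) * Nat.gcdA d e := by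
      push_cast; ring
    rw [this, zpow_mul, hxde, one_zpow]
/-- If `cs(G) = {1, p, p^a, p^b}` with `p` prime, `a, b ≥ 2` and `a ≠ b`, then `G` is an
internal direct product `G = P × A` with `P` a Sylow `p`-subgroup of `G` and `A` abelian. -/
theorem stmt_9 (G : Type*) [Group G] [Finite G] (p a b : ℕ)
    (hp : p.Prime) (ha : 2 ≤ a) (hb : 2 ≤ b) (hab : a ≠ b)
    (hcs : csSet G = {1, p, p ^ a, p ^ b}) :
    ∃ (P : Sylow p G) (A : Subgroup G),
      (∀ x ∈ A, ∀ y ∈ A, x * y = y * x) ∧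
      ∃ e : (↥(P : Subgroup G) × ↥A) ≃* G, ∀ (x : ↥(P : Subgroup G)) (y : A),
        e (x, y) = (x : G) * y := by
  classical
  haveI := Fact.mk hp
  -- every centralizer index is a power of p
  have hpow : ∀ g : G, ∃ k : ℕ, (Subgroup.centralizer {g} : Subgroup G).index = p ^ k := by
    intro g
    have hmem : (Subgroup.centralizer {g} : Subgroup G).index ∈ csSet G := ⟨g, rfl⟩
    rw [hcs] at hmem
    simp only [Set.mem_insert_iff, Set.mem_singleton_iff] at hmem
    rcases hmem with h | h | h | h
    exacts [⟨0, by simpa using h⟩, ⟨1, by simpa using h⟩, ⟨a, h⟩, ⟨b, h⟩]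
  -- every element of prime power order q^k with q ≠ p is central
  have central_of_prime_pow : ∀ (q : ℕ), q.Prime → q ≠ p → ∀ (x : G) (k : ℕ),
      orderOf x = q ^ k → x ∈ Subgroup.center G := by
    intro q hq hqp x k hx
    haveI := Fact.mk hq
    have hsyl : ∀ Q : Sylow q G, (Q : Subgroup G) ≤ Subgroup.center G := by
      intro Q
      have hC : Subgroup.centralizer ((Q : Subgroup G) : Set G) = ⊤ := by
        apply union_conj_eq_top
        intro g
        obtain ⟨kk, hkk⟩ := hpow g
        have hnd : ¬ q ∣ (Subgroup.centralizer {g} : Subgroup G).index := by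
          rw [hkk]
          intro hdvd
          exact hqp ((Nat.prime_dvd_prime_iff_eq hq hp).mp (hq.dvd_of_dvd_pow hdvd))
        obtain ⟨T, hT⟩ := sylow_le_of_not_dvd_index _ hnd
        obtain ⟨c, hc⟩ := MulAction.exists_smul_eq G Q T
        refine ⟨c, Subgroup.mem_centralizer_iff.mpr ?_⟩
        intro y hy
        have h1 : c * y * c⁻¹ ∈ (T : Subgroup G) := by
          rw [← hc, Sylow.coe_subgroup_smul, Subgroup.mem_pointwise_smul_iff_inv_smul_mem]
          have : (MulAut.conj c)⁻¹ • (c * y * c⁻¹) = y := by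
            simp [MulAut.conj_inv_apply, MulAut.smul_def, mul_assoc]
          rw [this]
          exact hy
        have h2 := Subgroup.mem_centralizer_iff.mp (hT h1) g rfl
        have h3 := congrArg (fun z => c⁻¹ * z * c) h2
        simpa [mul_assoc] using h3.symm
      intro x hxQ
      rw [Subgroup.mem_center_iff]
      intro g
      have : g ∈ Subgroup.centralizer ((Q : Subgroup G) : Set G) := by
        rw [hC]; trivial
      exact (Subgroup.mem_centralizer_iff.mp this x hxQ).symm
    have hzp : IsPGroup q (Subgroup.zpowers x) := by
      apply IsPGroup.of_card (n := k)
      rw [Nat.card_zpowers, hx]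
    obtain ⟨T, hT⟩ := hzp.exists_le_sylow
    exact hsyl T (hT (Subgroup.mem_zpowers x))
  -- every p'-element is central
  have central_p' : ∀ x : G, ¬ p ∣ orderOf x → x ∈ Subgroup.center G := by
    have key : ∀ n : ℕ, ∀ x : G, orderOf x = n → ¬ p ∣ n → x ∈ Subgroup.center G := by
      intro n
      induction n using Nat.strong_induction_on with
      | _ n ih =>
        intro x hx hpn
        rcases eq_or_ne n 1 with h1 | h1
        · have hx1 : x = 1 := orderOf_eq_one_iff.mp (by rw [hx, h1])
          rw [hx1]; exact Subgroup.one_mem _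
        · have hn0 : n ≠ 0 := by
            have := orderOf_pos x
            rw [hx] at this
            omega
          set q := n.minFac with hqdef
          have hq : q.Prime := Nat.minFac_prime h1
          have hqn : q ∣ n := Nat.minFac_dvd n
          have hqp : q ≠ p := by
            intro h
            exact hpn (h ▸ hqn)
          set k := n.factorization q with hkdef
          set m := n / q ^ k with hmdef
          have hfact : q ^ k * m = n := Nat.ordProj_mul_ordCompl_eq_self n q
          have hcop : Nat.Coprime (q ^ k) m := (Nat.coprime_ordCompl hq hn0).pow_left k
          obtain ⟨u, v, hxuv, hu, hv⟩ := split_elem x hcop (by rw [hx, hfact])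
          have hum : u ∈ Subgroup.center G := by
            have hdvd : orderOf u ∣ q ^ k := orderOf_dvd_of_pow_eq_one hu
            obtain ⟨j, _, hju⟩ := (Nat.dvd_prime_pow hq).mp hdvd
            exact central_of_prime_pow q hq hqp u j hju
          have hm0 : m ≠ 0 := by
            intro h
            rw [h, Nat.mul_zero] at hfact
            exact hn0 hfact.symm
          have hqk1 : 1 < q ^ k := by
            have hk0 : k ≠ 0 := by
              rw [hkdef]
              simpa using (Nat.Prime.factorization_pos_of_dvd hq hn0 hqn).ne'
            exact Nat.one_lt_pow hk0 hq.one_lt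
          have hmn : m < n := by
            calc m = 1 * m := (one_mul m).symm
              _ < q ^ k * m := by
                  exact Nat.mul_lt_mul_of_lt_of_le hqk1 le_rfl (Nat.pos_of_ne_zero hm0)
              _ = n := hfact
          have hvm : v ∈ Subgroup.center G := by
            have hod : orderOf v ∣ m := orderOf_dvd_of_pow_eq_one hv
            have hmdvd : m ∣ n := ⟨q ^ k, by rw [← hfact]; ring⟩
            refine ih (orderOf v) (lt_of_le_of_lt (Nat.le_of_dvd (Nat.pos_of_ne_zero hm0) hod) hmn) v rfl ?_
            intro hpd
            exact hpn ((hpd.trans hod).trans hmdvd)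
          rw [hxuv]
          exact Subgroup.mul_mem _ hum hvm
    intro x hx
    exact key (orderOf x) x rfl hx
  -- the abelian p'-part
  let A : Subgroup G :=
    { carrier := {x : G | x ∈ Subgroup.center G ∧ ¬ p ∣ orderOf x}
      one_mem' := ⟨Subgroup.one_mem _, by
        rw [orderOf_one]
        exact fun h => hp.ne_one (Nat.dvd_one.mp h)⟩
      mul_mem' := by
        rintro x y ⟨hxc, hxo⟩ ⟨hyc, hyo⟩
        refine ⟨Subgroup.mul_mem _ hxc hyc, ?_⟩
        intro hd
        have hcomm : Commute x y := (Subgroup.mem_center_iff.mp hxc y).symm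
        have h1 : p ∣ Nat.lcm (orderOf x) (orderOf y) :=
          hd.trans hcomm.orderOf_mul_dvd_lcm
        have h2 : p ∣ orderOf x * orderOf y := h1.trans (Nat.lcm_dvd_mul _ _)
        rcases (Nat.Prime.dvd_mul hp).mp h2 with h | h
        · exact hxo h
        · exact hyo h
      inv_mem' := by
        rintro x ⟨hxc, hxo⟩
        exact ⟨Subgroup.inv_mem _ hxc, by rwa [orderOf_inv]⟩ }
  have hAcenter : ∀ x ∈ A, x ∈ Subgroup.center G := fun x hx => hx.1
  haveI hAnormal : A.Normal := by
    constructor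
    intro x hx g
    have hgx : g * x * g⁻¹ = x := by
      rw [Subgroup.mem_center_iff.mp (hAcenter x hx) g]
      simp [mul_assoc]
    rw [hgx]
    exact hx
  -- the quotient by A is a p-group
  have hquot : IsPGroup p (G ⧸ A) := by
    intro gq
    obtain ⟨g, rfl⟩ := QuotientGroup.mk_surjective gq
    set n := orderOf g with hn
    have hn0 : n ≠ 0 := by
      have := orderOf_pos g
      omega
    set k := n.factorization p with hkdef
    set m := n / p ^ k with hmdef
    have hfact : p ^ k * m = n := Nat.ordProj_mul_ordCompl_eq_self n p
    have hcop : Nat.Coprime (p ^ k) m := (Nat.coprime_ordCompl hp hn0).pow_left k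
    obtain ⟨u, v, huv, hu, hv⟩ := split_elem g hcop (by rw [← hn, hfact])
    refine ⟨k, ?_⟩
    have hvA : v ∈ A := by
      have hvo : orderOf v ∣ m := orderOf_dvd_of_pow_eq_one hv
      have hpm : ¬ p ∣ m := (Nat.Prime.coprime_iff_not_dvd hp).mp (Nat.coprime_ordCompl hp hn0)
      have hnp : ¬ p ∣ orderOf v := fun h => hpm (h.trans hvo)
      exact ⟨central_p' v hnp, hnp⟩
    have hgu : (QuotientGroup.mk g : G ⧸ A) = QuotientGroup.mk u := by
      rw [huv, QuotientGroup.mk_mul, (QuotientGroup.eq_one_iff v).mpr hvA, mul_one]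
    rw [hgu]
    show (QuotientGroup.mk' A u) ^ p ^ k = 1
    rw [← map_pow, hu, map_one]
  obtain ⟨j, hj⟩ := hquot.exists_card_eq
  have hAindex : A.index = p ^ j := by rw [Subgroup.index_eq_card, hj]
  obtain ⟨P⟩ := (inferInstance : Nonempty (Sylow p G))
  have hsup : (P : Subgroup G) ⊔ A = ⊤ := by
    rw [← Subgroup.index_eq_one]
    have h1 : ((P : Subgroup G) ⊔ A).index ∣ p ^ j :=
      hAindex ▸ Subgroup.index_dvd_of_le le_sup_right
    have h2 : ((P : Subgroup G) ⊔ A).index ∣ (P : Subgroup G).index :=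
      Subgroup.index_dvd_of_le le_sup_left
    have hcop2 : Nat.Coprime (p ^ j) (P : Subgroup G).index :=
      Nat.Coprime.pow_left j ((Nat.Prime.coprime_iff_not_dvd hp).mpr P.not_dvd_index)
    exact Nat.dvd_one.mp (hcop2 ▸ Nat.dvd_gcd h1 h2)
  have hdisj : Disjoint (P : Subgroup G) A := by
    rw [Subgroup.disjoint_def]
    intro x hxP hxA
    obtain ⟨kk, hkk⟩ := P.2 ⟨x, hxP⟩
    have hx1 : x ^ p ^ kk = 1 := by
      have := congrArg (Subgroup.subtype _) hkk
      simpa using this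
    have hdvd : orderOf x ∣ p ^ kk := orderOf_dvd_of_pow_eq_one hx1
    obtain ⟨i, _, hoi⟩ := (Nat.dvd_prime_pow hp).mp hdvd
    rcases Nat.eq_zero_or_pos i with h0 | h0
    · exact orderOf_eq_one_iff.mp (by rw [hoi, h0, pow_zero])
    · exact absurd (hoi ▸ dvd_pow_self p h0.ne') hxA.2
  have hcomm : ∀ (x : ↥(P : Subgroup G)) (y : ↥A),
      Commute ((P : Subgroup G).subtype x) (A.subtype y) := by
    intro x y
    exact Subgroup.mem_center_iff.mp (hAcenter _ y.2) x
  let φ : (↥(P : Subgroup G) × ↥A) →* G :=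
    MonoidHom.noncommCoprod (P : Subgroup G).subtype A.subtype hcomm
  have hφ : Function.Bijective φ := by
    constructor
    · rintro ⟨x1, y1⟩ ⟨x2, y2⟩ h
      have h' : (x1 : G) * y1 = (x2 : G) * y2 := h
      have hz : ((x2 : G)⁻¹ * x1 : G) = (y2 : G) * (y1 : G)⁻¹ := by
        have h2 := congrArg (fun z => ((x2 : G))⁻¹ * z * ((y1 : G))⁻¹) h'
        simpa [mul_assoc] using h2
      have hzP : ((x2 : G)⁻¹ * x1 : G) ∈ (P : Subgroup G) :=
        Subgroup.mul_mem _ (Subgroup.inv_mem _ x2.2) x1.2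
      have hzA : ((x2 : G)⁻¹ * x1 : G) ∈ A := by
        rw [hz]
        exact Subgroup.mul_mem _ y2.2 (Subgroup.inv_mem _ y1.2)
      have hz1 : ((x2 : G)⁻¹ * x1 : G) = 1 := Subgroup.disjoint_def.mp hdisj hzP hzA
      have hx12 : (x1 : G) = x2 := by
        have := congrArg (fun z => (x2 : G) * z) hz1
        simpa [mul_assoc] using this
      have hy12 : (y1 : G) = y2 := by
        rw [hz1] at hz
        have := hz.symm
        rw [mul_inv_eq_one] at this
        exact this.symm
      exact Prod.ext (Subtype.ext hx12) (Subtype.ext hy12)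
    · intro g
      have hg : g ∈ (((P : Subgroup G) ⊔ A : Subgroup G) : Set G) := by
        rw [hsup]; trivial
      rw [Subgroup.mul_normal] at hg
      obtain ⟨x, hx, y, hy, rfl⟩ := hg
      exact ⟨(⟨x, hx⟩, ⟨y, hy⟩), rfl⟩
  refine ⟨P, A, fun x hx y _ => Subgroup.mem_center_iff.mp (hAcenter x hx) y |>.symm,
    MulEquiv.ofBijective φ hφ, fun x y => rfl⟩
end

section
/- Let G be a finite group, r a prime, and g ∈ G an r-element such that the centralizer X = C_G(g) does not properly contain the centralizer of any element of G. Then every element of X whose order is coprime to r lies in the centre of X; consequently X = R × A, where R is a Sylow r-subgroup of X and A is an abelian group of order coprime to r. -/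
theorem ito_aux (G : Type*) [Group G] [Finite G] (r : ℕ) (g : G)
    (hg : ∃ k : ℕ, orderOf g = r ^ k)
    (hmin : ∀ h : G, Subgroup.centralizer {h} ≤ Subgroup.centralizer {g} →
      Subgroup.centralizer {h} = Subgroup.centralizer {g}) :
    ∀ x (hx : x ∈ Subgroup.centralizer {g}), Nat.Coprime (orderOf x) r →
      (⟨x, hx⟩ : Subgroup.centralizer {g}) ∈ Subgroup.center (Subgroup.centralizer {g}) := by
  intro x hx hco
  obtain ⟨k, hk⟩ := hg
  have hcomm : Commute g x := (Subgroup.mem_centralizer_singleton_iff.mp hx).symm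
  have hcop : Nat.Coprime (orderOf g) (orderOf x) := by
    rw [hk]; exact (hco.symm.pow_left k)
  obtain ⟨m, hm1, hm0⟩ := Nat.chineseRemainder hcop 1 0
  have hpow : (g * x) ^ m = g := by
    rw [hcomm.mul_pow]
    have h1 : g ^ m = g ^ 1 := pow_eq_pow_iff_modEq.mpr hm1
    have h0 : x ^ m = x ^ 0 := pow_eq_pow_iff_modEq.mpr hm0
    rw [h1, h0, pow_one, pow_zero, mul_one]
  have hle : Subgroup.centralizer {g * x} ≤ Subgroup.centralizer {g} := by
    intro y hy
    rw [Subgroup.mem_centralizer_singleton_iff] at hy ⊢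
    have hcy : Commute (g * x) y := hy.symm
    have := (hcy.pow_left m)
    rw [hpow] at this
    exact this.symm.eq
  have heq := hmin (g * x) hle
  rw [Subgroup.mem_center_iff]
  rintro ⟨y, hy⟩
  have hy' : y ∈ Subgroup.centralizer {g * x} := heq ▸ hy
  rw [Subgroup.mem_centralizer_singleton_iff] at hy'
  have hyg : y * g = g * y := (Subgroup.mem_centralizer_singleton_iff.mp hy).symm.symm
  have : y * x = x * y := by
    have h1 : g * (x * y) = g * (y * x) := by
      calc g * (x * y) = (g * x) * y := by rw [mul_assoc]
        _ = y * (g * x) := hy'.symm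
        _ = (y * g) * x := by rw [mul_assoc]
        _ = (g * y) * x := by rw [hyg]
        _ = g * (y * x) := by rw [mul_assoc]
    exact (mul_left_cancel h1).symm
  exact Subtype.ext (by simpa using this)


/-- Itô's lemma on minimal centralisers: if `g` is an `r`-element of a finite group `G`
whose centralizer `X = C_G(g)` does not properly contain any other centralizer, then every
element of `X` of order coprime to `r` is central in `X`, and `X = R × A` with `R` a Sylow
`r`-subgroup of `X` and `A` abelian of order coprime to `r`. -/
theorem stmt_12 (G : Type*) [Group G] [Finite G] (r : ℕ) (hr : r.Prime) (g : G)
    (hg : ∃ k : ℕ, orderOf g = r ^ k)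
    (hmin : ∀ h : G, Subgroup.centralizer {h} ≤ Subgroup.centralizer {g} →
      Subgroup.centralizer {h} = Subgroup.centralizer {g}) :
    (∀ x (hx : x ∈ Subgroup.centralizer {g}), Nat.Coprime (orderOf x) r →
      (⟨x, hx⟩ : Subgroup.centralizer {g}) ∈ Subgroup.center (Subgroup.centralizer {g})) ∧
    ∃ (R : Sylow r (Subgroup.centralizer {g})) (A : Subgroup (Subgroup.centralizer {g})),
      (∀ x ∈ A, ∀ y ∈ A, x * y = y * x) ∧
      Nat.Coprime (Nat.card A) r ∧
      ∃ e : (↥(R : Subgroup (Subgroup.centralizer {g})) × ↥A) ≃*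
          (Subgroup.centralizer {g} : Subgroup G),
        ∀ (x : ↥(R : Subgroup (Subgroup.centralizer {g}))) (y : A),
          e (x, y) = (x : Subgroup.centralizer {g}) * y := by
  have hcen := ito_aux G r g hg hmin
  set X := Subgroup.centralizer {g} with hX
  haveI : Fact r.Prime := ⟨hr⟩
  refine ⟨hcen, ?_⟩
  -- the subgroup of r'-elements
  have hcen' : ∀ a : X, Nat.Coprime (orderOf a) r → a ∈ Subgroup.center X := by
    rintro ⟨a, ha⟩ hco
    exact hcen a ha (by rwa [Subgroup.orderOf_mk] at hco)
  let A : Subgroup X :=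
    { carrier := {a : X | Nat.Coprime (orderOf a) r}
      one_mem' := by simp [Set.mem_setOf_eq, Nat.coprime_one_left]
      mul_mem' := by
        intro a b ha hb
        have hcom : Commute a b := Subgroup.mem_center_iff.mp (hcen' a ha) b |>.symm
        have hdvd : orderOf (a * b) ∣ Nat.lcm (orderOf a) (orderOf b) :=
          hcom.orderOf_mul_dvd_lcm
        exact Nat.Coprime.coprime_dvd_left (hdvd.trans (Nat.lcm_dvd_mul _ _))
          (Nat.Coprime.mul ha hb)
      inv_mem' := by
        intro a ha
        simpa [Set.mem_setOf_eq, orderOf_inv] using ha }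
  have hmemA : ∀ a : X, a ∈ A ↔ Nat.Coprime (orderOf a) r := fun a => Iff.rfl
  have hAcen : ∀ a ∈ A, a ∈ Subgroup.center X := fun a ha => hcen' a ((hmemA a).mp ha)
  have hAcomm : ∀ (b : X), ∀ a ∈ A, b * a = a * b := fun b a ha =>
    Subgroup.mem_center_iff.mp (hAcen a ha) b
  haveI hAnormal : A.Normal := by
    constructor
    intro a ha n
    have : n * a * n⁻¹ = a := by rw [hAcomm n a ha, mul_assoc, mul_inv_cancel, mul_one]
    rwa [this]
  -- card A coprime to r
  have hcardA : Nat.Coprime (Nat.card A) r := by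
    by_contra h
    have hdvd : r ∣ Nat.card A := by
      by_contra h2
      exact h ((hr.coprime_iff_not_dvd.mpr h2).symm)
    obtain ⟨a, ha⟩ := exists_prime_orderOf_dvd_card' (G := A) r hdvd
    have h1 : Nat.Coprime (orderOf (a : X)) r := (hmemA _).mp a.2
    rw [Subgroup.orderOf_coe, ha] at h1
    exact hr.one_lt.ne' ((Nat.coprime_self r).mp h1)
  -- quotient is an r-group
  have hQ : IsPGroup r (X ⧸ A) := by
    intro q
    obtain ⟨x, rfl⟩ := QuotientGroup.mk_surjective q
    refine ⟨(orderOf x).factorization r, ?_⟩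
    rw [← QuotientGroup.mk_pow, QuotientGroup.eq_one_iff]
    rw [hmemA]
    have hne : orderOf x ≠ 0 := (orderOf_pos x).ne'
    rw [orderOf_pow, Nat.gcd_eq_right (Nat.ordProj_dvd _ _)]
    exact (Nat.coprime_ordCompl hr hne).symm
  obtain ⟨m, hm⟩ := IsPGroup.iff_card.mp hQ
  -- cardinalities
  have hcardX : Nat.card X = r ^ m * Nat.card A := by
    rw [Subgroup.card_eq_card_quotient_mul_card_subgroup A, hm]
  obtain ⟨R⟩ := (inferInstance : Nonempty (Sylow r X))
  have hAne : Nat.card A ≠ 0 := Nat.card_pos.ne'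
  have hfact : (Nat.card X).factorization r = m := by
    rw [hcardX, Nat.factorization_mul (pow_ne_zero _ hr.pos.ne') hAne]
    rw [hr.factorization_pow]
    simp [Nat.factorization_eq_zero_of_not_dvd (hr.coprime_iff_not_dvd.mp hcardA.symm)]
  have hcardR : Nat.card (R : Subgroup X) = r ^ m := by
    rw [R.card_eq_multiplicity, hfact]
  -- the mul equiv
  have hcomm2 : ∀ (x : (R : Subgroup X)) (y : A),
      Commute ((R : Subgroup X).subtype x) (A.subtype y) := by
    intro x y
    exact hAcomm (x : X) (y : X) y.2
  let f : (↥(R : Subgroup X) × ↥A) →* X :=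
    MonoidHom.noncommCoprod (R : Subgroup X).subtype A.subtype hcomm2
  have hfapply : ∀ (x : (R : Subgroup X)) (y : A), f (x, y) = (x : X) * (y : X) :=
    fun x y => rfl
  have hinj : Function.Injective f := by
    rw [injective_iff_map_eq_one]
    rintro ⟨x, y⟩ h
    rw [hfapply] at h
    have hx : (x : X) = (y : X)⁻¹ := eq_inv_of_mul_eq_one_left h
    have hxA : (x : X) ∈ A := hx ▸ A.inv_mem y.2
    have hco : Nat.Coprime (orderOf (x : X)) r := (hmemA _).mp hxA
    obtain ⟨k, hk⟩ := R.2 x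
    have hdvd : orderOf x ∣ r ^ k := orderOf_dvd_of_pow_eq_one hk
    rw [Subgroup.orderOf_coe] at hco
    have hone : orderOf x = 1 := Nat.eq_one_of_dvd_coprimes (hco.pow_right k) dvd_rfl hdvd
    have hx1 : x = 1 := orderOf_eq_one_iff.mp hone
    have hy1 : (y : X) = 1 := by
      rw [hx1] at h; simpa using h
    exact Prod.ext hx1 (Subtype.ext (by simpa using hy1))
  have hcard : Nat.card (↥(R : Subgroup X) × ↥A) = Nat.card X := by
    rw [Nat.card_prod, hcardR, hcardX]
  have hbij : Function.Bijective f :=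
    (Nat.bijective_iff_injective_and_card f).mpr ⟨hinj, hcard⟩
  exact ⟨R, A, fun x hx y hy => hAcomm x y hy, hcardA,
    MulEquiv.ofBijective f hbij, fun x y => hfapply x y⟩
end

section
/- Let G be a finite group and let a, b_1, b_2 be pairwise coprime elements of cs(G) with 1 < a < b_1 < b_2. Then there exist i ∈ {1, 2} and c ∈ cs(G) such that c > b_i and c divides a·b_i. -/
section Aux

open Subgroup MulAction Set

variable {G : Type*} [Group G] [Finite G]

private lemma idx_ne (H : Subgroup G) : H.index ≠ 0 :=
  Subgroup.index_ne_zero_of_finite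

/-- coprime indices: index of intersection is the product -/
private lemma index_inf_eq {H K : Subgroup G} (h : Nat.Coprime H.index K.index) :
    (H ⊓ K).index = H.index * K.index := by
  refine le_antisymm Subgroup.index_inf_le (Nat.le_of_dvd ?_ ?_)
  · exact Nat.pos_of_ne_zero (idx_ne _)
  · exact h.mul_dvd_of_dvd_of_dvd (Subgroup.index_dvd_of_le inf_le_left)
      (Subgroup.index_dvd_of_le inf_le_right)

/-- coprime indices: every element decomposes as h * k -/
private lemma covering {H K : Subgroup G} (h : Nat.Coprime H.index K.index) (w : G) :
    ∃ u ∈ H, ∃ v ∈ K, w = u * v := by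
  have hrel : K.relIndex H = K.index := by
    have h1 : (H ⊓ K).relIndex H * H.index = (H ⊓ K).index :=
      Subgroup.relIndex_mul_index inf_le_left
    rw [Subgroup.inf_relIndex_left, index_inf_eq h, mul_comm (H.index)] at h1
    exact Nat.eq_of_mul_eq_mul_right (Nat.pos_of_ne_zero (idx_ne H)) h1
  -- orbit of 1 in G ⧸ K under H is everything
  have horb : orbit H ((1 : G) : G ⧸ K) = Set.univ := by
    have hstab : stabilizer H ((1 : G) : G ⧸ K) = K.subgroupOf H := by
      ext u
      rw [mem_stabilizer_iff, Subgroup.mem_subgroupOf]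
      change ((u:G) • ((1:G) : G ⧸ K)) = _ ↔ _
      rw [MulAction.Quotient.smul_mk, smul_eq_mul, mul_one, QuotientGroup.eq]
      simp
    have hcard : (orbit H ((1 : G) : G ⧸ K)).ncard = Nat.card (G ⧸ K) := by
      rw [← MulAction.index_stabilizer, hstab]
      have : (K.subgroupOf H).index = K.relIndex H := rfl
      rw [this, hrel, Subgroup.index]
    apply Set.eq_of_subset_of_ncard_le (Set.subset_univ _) _ (Set.toFinite _)
    rw [hcard, Set.ncard_univ]
  have hw : ((w : G) : G ⧸ K) ∈ orbit H ((1 : G) : G ⧸ K) := by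
    rw [horb]; trivial
  obtain ⟨u, hu⟩ := hw
  dsimp only at hu
  change ((u:G) • ((1:G) : G ⧸ K)) = _ at hu
  rw [MulAction.Quotient.smul_mk, smul_eq_mul, mul_one] at hu
  refine ⟨u, u.2, (u : G)⁻¹ * w, ?_, by group⟩
  exact QuotientGroup.eq.mp hu

/-- the conjugacy class of x as a set -/
private def Cl (x : G) : Set G := {z | IsConj x z}

private lemma mem_Cl_iff {x z : G} : z ∈ Cl x ↔ ∃ c : G, c * x * c⁻¹ = z := isConj_iff

private lemma x_mem_Cl (x : G) : x ∈ Cl x := IsConj.refl x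

private lemma ncard_Cl (x : G) : (Cl x).ncard = (Subgroup.centralizer {x}).index := by
  have h1 : orbit (ConjAct G) x = Cl x := by
    ext z
    rw [ConjAct.mem_orbit_conjAct]
    exact isConj_comm
  rw [← h1, ← MulAction.index_stabilizer, Subgroup.centralizer_eq_comap_stabilizer]
  exact (Subgroup.index_comap_of_surjective (f := ConjAct.toConjAct.toMonoidHom)
    _ ConjAct.toConjAct.surjective).symm

/-- key algebraic identity: products of conjugates are conjugates of the product -/
private lemma conj_prod {x y : G}
    (hcov : ∀ w : G, ∃ u ∈ Subgroup.centralizer {x}, ∃ v ∈ Subgroup.centralizer {y}, w = u * v)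
    (g h : G) : (g * x * g⁻¹) * (h * y * h⁻¹) ∈ Cl (x * y) := by
  obtain ⟨u, hu, v, hv, huv⟩ := hcov (g⁻¹ * h)
  have hxu : x * u = u * x := Subgroup.mem_centralizer_iff.mp hu x rfl
  have hyv : v⁻¹ * y * v = y := by
    have : y * v = v * y := Subgroup.mem_centralizer_iff.mp hv y rfl
    rw [mul_assoc, this, ← mul_assoc, inv_mul_cancel, one_mul]
  have hh : h = g * (u * v) := by
    rw [← huv]; group
  rw [mem_Cl_iff]
  refine ⟨g * u, ?_⟩
  calc (g * u) * (x * y) * (g * u)⁻¹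
      = g * (u * x) * (y * (u⁻¹ * g⁻¹)) := by group
    _ = g * (x * u) * (y * (u⁻¹ * g⁻¹)) := by rw [hxu]
    _ = (g * x * g⁻¹) * ((g * (u * v)) * (v⁻¹ * y * v) * (g * (u * v))⁻¹) := by group
    _ = (g * x * g⁻¹) * ((g * (u * v)) * y * (g * (u * v))⁻¹) := by rw [hyv]
    _ = (g * x * g⁻¹) * (h * y * h⁻¹) := by rw [← hh]

private lemma invariance {x y : G}
    (hcop : Nat.Coprime (Subgroup.centralizer {x} : Subgroup G).index
      (Subgroup.centralizer {y} : Subgroup G).index)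
    (hle : ∀ c ∈ csSet G,
      c ∣ (Subgroup.centralizer {x} : Subgroup G).index *
        (Subgroup.centralizer {y} : Subgroup G).index →
      c ≤ (Subgroup.centralizer {y} : Subgroup G).index) :
    ∀ g : G, ∀ w ∈ Cl y, w * (g * x * g⁻¹ * x⁻¹) ∈ Cl y := by
  set A := (Subgroup.centralizer {x} : Subgroup G) with hA
  set B := (Subgroup.centralizer {y} : Subgroup G) with hB
  have hcov : ∀ w : G, ∃ u ∈ (Subgroup.centralizer {y} : Subgroup G),
      ∃ v ∈ (Subgroup.centralizer {x} : Subgroup G), w = u * v := covering hcop.symm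
  -- the set of products (conj of y) * x
  set S : Set G := (fun w => w * x) '' Cl y with hS
  have hSsub : S ⊆ Cl (y * x) := by
    rintro - ⟨w, hw, rfl⟩
    obtain ⟨h, rfl⟩ := mem_Cl_iff.mp hw
    have := conj_prod hcov h 1
    simpa using this
  have hScard : S.ncard = (Cl y).ncard :=
    Set.ncard_image_of_injective _ (mul_left_injective x)
  -- the class of y * x
  have hdvd : (Subgroup.centralizer {y * x} : Subgroup G).index ∣ A.index * B.index := by
    have hle' : A ⊓ B ≤ Subgroup.centralizer {y * x} := by
      intro z hz
      rw [Subgroup.mem_inf] at hz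
      rw [Subgroup.mem_centralizer_iff]
      rintro - rfl
      have h1 : x * z = z * x := Subgroup.mem_centralizer_iff.mp hz.1 x rfl
      have h2 : y * z = z * y := Subgroup.mem_centralizer_iff.mp hz.2 y rfl
      rw [mul_assoc, h1, ← mul_assoc, h2, mul_assoc]
    calc (Subgroup.centralizer {y * x} : Subgroup G).index ∣ (A ⊓ B).index :=
          Subgroup.index_dvd_of_le hle'
      _ = A.index * B.index := index_inf_eq hcop
  have hcle : (Subgroup.centralizer {y * x} : Subgroup G).index ≤ B.index :=
    hle _ ⟨y * x, rfl⟩ hdvd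
  have hSeq : S = Cl (y * x) := by
    apply Set.eq_of_subset_of_ncard_le hSsub _ (Set.toFinite _)
    rw [hScard, ncard_Cl, ncard_Cl]
    exact hcle
  intro g w hw
  obtain ⟨h, rfl⟩ := mem_Cl_iff.mp hw
  have hmem : (h * y * h⁻¹) * (g * x * g⁻¹) ∈ Cl (y * x) := conj_prod hcov h g
  rw [← hSeq] at hmem
  obtain ⟨w', hw', heq⟩ := hmem
  dsimp only at heq
  have hmul : ((h * y * h⁻¹) * (g * x * g⁻¹ * x⁻¹)) * x = w' * x := by
    rw [heq]; group
  have : (h * y * h⁻¹) * (g * x * g⁻¹ * x⁻¹) = w' := mul_right_cancel hmul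
  rw [← mul_assoc] at this ⊢
  rw [this]
  exact hw'

private lemma card_zpowers_dvd {μ : G} {O : Set G} (hinv : ∀ w ∈ O, w * μ ∈ O) :
    Nat.card (Subgroup.zpowers μ) ∣ O.ncard := by
  have hpow : ∀ (n : ℕ), ∀ w ∈ O, w * μ ^ n ∈ O := by
    intro n
    induction n with
    | zero => simpa using fun w hw => hw
    | succ n ih =>
      intro w hw
      rw [pow_succ, ← mul_assoc]
      exact hinv _ (ih w hw)
  have hz : ∀ ζ ∈ Subgroup.zpowers μ, ∀ w ∈ O, w * ζ ∈ O := by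
    intro ζ hζ w hw
    have : ζ ∈ Submonoid.powers μ := mem_powers_iff_mem_zpowers.mpr hζ
    obtain ⟨n, rfl⟩ := this
    exact hpow n w hw
  set H := Subgroup.zpowers μ with hH
  set T : Set (G ⧸ H) := QuotientGroup.mk '' O with hT
  have hOeq : O = QuotientGroup.mk ⁻¹' T := by
    apply Set.Subset.antisymm (Set.subset_preimage_image _ _)
    intro z hz'
    obtain ⟨w, hw, hwz⟩ := hz'
    have : w⁻¹ * z ∈ H := QuotientGroup.eq.mp hwz
    have := hz _ this w hw
    simpa using this
  have : O.ncard = Nat.card H * Nat.card T := by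
    rw [← Nat.card_coe_set_eq, hOeq, Nat.card_congr
      (QuotientGroup.preimageMkEquivSubgroupProdSet H T), Nat.card_prod,
      Nat.card_coe_set_eq, hT]
  exact this ▸ Dvd.intro _ rfl

end Aux

/-- If `1 < a < b₁ < b₂` are pairwise coprime conjugacy class sizes of a finite group `G`,
then there are `i ∈ {1, 2}` and `c ∈ cs(G)` with `c > bᵢ` and `c ∣ a·bᵢ`. -/
theorem stmt_13 (G : Type*) [Group G] [Finite G] (a b₁ b₂ : ℕ)
    (hab₁ : Nat.Coprime a b₁) (hab₂ : Nat.Coprime a b₂) (hb₁b₂ : Nat.Coprime b₁ b₂)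
    (ha : a ∈ csSet G) (hb₁ : b₁ ∈ csSet G) (hb₂ : b₂ ∈ csSet G)
    (h1 : 1 < a) (h2 : a < b₁) (h3 : b₁ < b₂) :
    ∃ c ∈ csSet G, (b₁ < c ∧ c ∣ a * b₁) ∨ (b₂ < c ∧ c ∣ a * b₂) := by
  by_contra hcon
  obtain ⟨x, rfl⟩ := ha
  obtain ⟨y₁, rfl⟩ := hb₁
  obtain ⟨y₂, rfl⟩ := hb₂
  have hle₁ : ∀ c ∈ csSet G,
      c ∣ (Subgroup.centralizer {x} : Subgroup G).index *
        (Subgroup.centralizer {y₁} : Subgroup G).index →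
      c ≤ (Subgroup.centralizer {y₁} : Subgroup G).index := by
    intro c hc hdvd
    by_contra hlt
    push_neg at hlt
    exact hcon ⟨c, hc, Or.inl ⟨hlt, hdvd⟩⟩
  have hle₂ : ∀ c ∈ csSet G,
      c ∣ (Subgroup.centralizer {x} : Subgroup G).index *
        (Subgroup.centralizer {y₂} : Subgroup G).index →
      c ≤ (Subgroup.centralizer {y₂} : Subgroup G).index := by
    intro c hc hdvd
    by_contra hlt
    push_neg at hlt
    exact hcon ⟨c, hc, Or.inr ⟨hlt, hdvd⟩⟩
  have inv₁ := invariance hab₁ hle₁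
  have inv₂ := invariance hab₂ hle₂
  -- every commutator of x is trivial
  have hμ : ∀ g : G, g * x * g⁻¹ * x⁻¹ = 1 := by
    intro g
    set μ := g * x * g⁻¹ * x⁻¹ with hμdef
    have d₁ : Nat.card (Subgroup.zpowers μ) ∣ (Cl y₁).ncard :=
      card_zpowers_dvd (fun w hw => inv₁ g w hw)
    have d₂ : Nat.card (Subgroup.zpowers μ) ∣ (Cl y₂).ncard :=
      card_zpowers_dvd (fun w hw => inv₂ g w hw)
    rw [ncard_Cl] at d₁ d₂
    have hone : Nat.card (Subgroup.zpowers μ) = 1 :=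
      Nat.dvd_one.mp (hb₁b₂ ▸ Nat.dvd_gcd d₁ d₂)
    have hbot : Subgroup.zpowers μ = ⊥ := Subgroup.card_eq_one.mp hone
    have : μ ∈ Subgroup.zpowers μ := Subgroup.mem_zpowers μ
    rw [hbot, Subgroup.mem_bot] at this
    exact this
  -- hence x is central, contradicting 1 < a
  have hcent : (Subgroup.centralizer {x} : Subgroup G) = ⊤ := by
    rw [eq_top_iff]
    intro g _
    rw [Subgroup.mem_centralizer_iff]
    intro z hz
    rw [Set.mem_singleton_iff] at hz
    rw [hz]
    have := hμ g
    have hxg : g * x * g⁻¹ = x := by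
      have h' : g * x * g⁻¹ * x⁻¹ * x = 1 * x := by rw [this]
      simpa using h'
    calc x * g = (g * x * g⁻¹) * g := by rw [hxg]
      _ = g * x := by group
  rw [hcent, Subgroup.index_top] at h1
  exact absurd h1 (by norm_num)
end

section
/- Let G be a finite group, t a prime, and let x, y ∈ G \ Z(G) be t-elements such that |x^G| and |y^G| are powers of two distinct primes and |(xy)^G| is a power of a prime. Then the subgroup generated by x and y is contained in O_t(G), and |(xy)^G| = max{|x^G|, |y^G|} is a power of t; in particular, a Sylow t-subgroup of G is nonabelian. -/
open Subgroup

namespace KazarinAux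

variable {G : Type*} [Group G]

/-- The set of conjugates of `a` by elements of (the carrier of) `D`. -/
def conjOn (a : G) (D : Subgroup G) : Set G := (fun g => g⁻¹ * a * g) '' (D : Set G)

lemma mem_conjOn {a b : G} {D : Subgroup G} :
    b ∈ conjOn a D ↔ ∃ g ∈ D, g⁻¹ * a * g = b := by
  simp [conjOn]

lemma conjOn_mono (a : G) {D₁ D₂ : Subgroup G} (h : D₁ ≤ D₂) :
    conjOn a D₁ ⊆ conjOn a D₂ :=
  Set.image_mono h

lemma self_mem_conjOn (a : G) (D : Subgroup G) : a ∈ conjOn a D :=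
  ⟨1, D.one_mem, by group⟩

noncomputable def conjOnEquiv (a : G) (D : Subgroup G) :
    (D ⧸ ((Subgroup.centralizer {a}).subgroupOf D)) ≃ conjOn a D := by
  refine Equiv.ofBijective (Quotient.lift
    (fun d : D => (⟨(d : G) * a * (d : G)⁻¹, (d : G)⁻¹, inv_mem d.2, by group⟩ : conjOn a D))
    ?_) ⟨?_, ?_⟩
  · intro d₁ d₂ h
    have h' : ((d₁⁻¹ * d₂ : D) : G) ∈ Subgroup.centralizer {a} :=
      (Subgroup.mem_subgroupOf).mp (QuotientGroup.leftRel_apply.mp h)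
    have hc : a * ((d₁ : G)⁻¹ * d₂) = ((d₁ : G)⁻¹ * d₂) * a := by
      simpa using (Subgroup.mem_centralizer_iff.mp h') a rfl
    ext
    show (d₁ : G) * a * (d₁ : G)⁻¹ = (d₂ : G) * a * (d₂ : G)⁻¹
    have := congrArg (fun w => (d₁ : G) * w * (d₂ : G)⁻¹) hc
    simpa [mul_assoc] using this
  · intro q₁ q₂
    induction q₁ using Quotient.inductionOn with
    | h d₁ =>
    induction q₂ using Quotient.inductionOn with
    | h d₂ =>
    intro h
    have h' : (d₁ : G) * a * (d₁ : G)⁻¹ = (d₂ : G) * a * (d₂ : G)⁻¹ := congrArg Subtype.val h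
    refine Quotient.sound (QuotientGroup.leftRel_apply.mpr ?_)
    refine Subgroup.mem_subgroupOf.mpr (Subgroup.mem_centralizer_iff.mpr ?_)
    intro b hb
    rcases hb with rfl
    show b * ((d₁ : G)⁻¹ * d₂) = ((d₁ : G)⁻¹ * d₂) * b
    have := congrArg (fun w => (d₁ : G)⁻¹ * w * (d₂ : G)) h'
    simpa [mul_assoc] using this
  · rintro ⟨b, g, hg, rfl⟩
    exact ⟨Quotient.mk'' ⟨g⁻¹, inv_mem hg⟩, by ext; show (g⁻¹ : G) * a * (g⁻¹ : G)⁻¹ = _; group⟩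

lemma card_conjOn (a : G) (D : Subgroup G) :
    Nat.card (conjOn a D) = (Subgroup.centralizer {a}).relIndex D :=
  (Nat.card_congr (conjOnEquiv a D)).symm

lemma card_conjOn_top (a : G) :
    Nat.card (conjOn a (⊤ : Subgroup G)) = (Subgroup.centralizer {a}).index := by
  rw [card_conjOn, Subgroup.relIndex_top_right]


section Finite
variable [Finite G]

lemma index_inf_of_coprime {H K : Subgroup G}
    (h : Nat.Coprime H.index K.index) : (H ⊓ K).index = H.index * K.index := by
  refine Nat.le_antisymm Subgroup.index_inf_le (Nat.le_of_dvd ?_ ?_)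
  · exact Nat.pos_of_ne_zero (Subgroup.index_ne_zero_of_finite)
  · exact h.mul_dvd_of_dvd_of_dvd (Subgroup.index_dvd_of_le inf_le_left)
      (Subgroup.index_dvd_of_le inf_le_right)

lemma relindex_of_coprime {H K : Subgroup G}
    (h : Nat.Coprime H.index K.index) : H.relIndex K = H.index := by
  have h1 : (H ⊓ K).relIndex K * K.index = (H ⊓ K).index :=
    Subgroup.relIndex_mul_index inf_le_right
  rw [Subgroup.inf_relIndex_right, index_inf_of_coprime h] at h1
  exact Nat.eq_of_mul_eq_mul_right
    (Nat.pos_of_ne_zero (Subgroup.index_ne_zero_of_finite)) h1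

/-- If the indices of centralizers are coprime then all conjugates of `a`
are obtained by conjugating with elements of the centralizer of `b`. -/
lemma conjOn_centralizer_eq_top {a b : G}
    (h : Nat.Coprime (Subgroup.centralizer {a}).index (Subgroup.centralizer {b}).index) :
    conjOn a (Subgroup.centralizer {b}) = conjOn a ⊤ := by
  apply Set.eq_of_subset_of_ncard_le (conjOn_mono a le_top)
  rw [← Nat.card_coe_set_eq, ← Nat.card_coe_set_eq, card_conjOn_top, card_conjOn,
    relindex_of_coprime h]

end Finite

lemma conjOn_top_conj_image (a h : G) :
    (fun b => h⁻¹ * b * h) '' (conjOn a ⊤) = conjOn a ⊤ := by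
  ext b
  constructor
  · rintro ⟨c, ⟨g, -, rfl⟩, rfl⟩
    exact ⟨g * h, Subgroup.mem_top _, by group⟩
  · rintro ⟨g, -, rfl⟩
    exact ⟨(g * h⁻¹)⁻¹ * a * (g * h⁻¹), ⟨g * h⁻¹, Subgroup.mem_top _, rfl⟩, by group⟩

/-- right-translation stabilizer of a set -/
def rstab (S : Set G) : Subgroup G where
  carrier := {k | (fun s => s * k) '' S = S}
  one_mem' := by simp
  mul_mem' := by
    intro k₁ k₂ h₁ h₂
    show (fun s => s * (k₁ * k₂)) '' S = S
    have : (fun s => s * (k₁ * k₂)) '' S = (fun s => s * k₂) '' ((fun s => s * k₁) '' S) := by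
      rw [Set.image_image]; simp [mul_assoc]
    rw [this, h₁, h₂]
  inv_mem' := by
    intro k h
    show (fun s => s * k⁻¹) '' S = S
    conv_lhs => rw [← h]
    rw [Set.image_image]; simp

lemma mem_rstab {S : Set G} {k : G} : k ∈ rstab S ↔ (fun s => s * k) '' S = S := Iff.rfl

/-- left-translation stabilizer of a set -/
def lstab (S : Set G) : Subgroup G where
  carrier := {k | (fun s => k * s) '' S = S}
  one_mem' := by simp
  mul_mem' := by
    intro k₁ k₂ h₁ h₂
    show (fun s => (k₁ * k₂) * s) '' S = S
    have : (fun s => (k₁ * k₂) * s) '' S = (fun s => k₁ * s) '' ((fun s => k₂ * s) '' S) := by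
      rw [Set.image_image]; simp [mul_assoc]
    rw [this, h₂, h₁]
  inv_mem' := by
    intro k h
    show (fun s => k⁻¹ * s) '' S = S
    conv_lhs => rw [← h]
    rw [Set.image_image]; simp

lemma mem_lstab {S : Set G} {k : G} : k ∈ lstab S ↔ (fun s => k * s) '' S = S := Iff.rfl

/-- A `t`-element in the right-translation stabilizer of a set of size prime to `t`
is trivial. -/
lemma eq_one_of_rstab {t : ℕ} (ht : t.Prime) {S : Set G}
    (hcard : ¬ t ∣ Nat.card S) {s : G} (hs : s ∈ rstab S)
    (hord : ∃ m : ℕ, orderOf s = t ^ m) : s = 1 := by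
  haveI : Fact t.Prime := ⟨ht⟩
  obtain ⟨m, hm⟩ := hord
  have hz : Subgroup.zpowers s ≤ rstab S := Subgroup.zpowers_le.mpr hs
  letI : SMul (Subgroup.zpowers s) S := ⟨fun γ b => ⟨(b : G) * (γ : G)⁻¹, by
    have hmem : (fun w => w * (γ : G)⁻¹) '' S = S := mem_rstab.mp (inv_mem (hz γ.2))
    have h2 : (b : G) * (γ : G)⁻¹ ∈ (fun w => w * (γ : G)⁻¹) '' S := ⟨b, b.2, rfl⟩
    rwa [hmem] at h2⟩⟩
  letI : MulAction (Subgroup.zpowers s) S :=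
    { one_smul := by intro b; ext; show (b : G) * (1 : G)⁻¹ = b; simp
      mul_smul := by
        intro γ δ b; ext
        show (b : G) * ((γ : G) * δ)⁻¹ = ((b : G) * (δ : G)⁻¹) * (γ : G)⁻¹
        group }
  have hp : IsPGroup t (Subgroup.zpowers s) :=
    IsPGroup.of_card (n := m) (by rw [Nat.card_zpowers, hm])
  have hfix := hp.nonempty_fixed_point_of_prime_not_dvd_card S (by
    simpa using hcard)
  obtain ⟨b, hb⟩ := hfix
  have h1 : (⟨s, Subgroup.mem_zpowers s⟩ : Subgroup.zpowers s) • b = b := hb _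
  have h2 : (b : G) * s⁻¹ = (b : G) := congrArg Subtype.val h1
  have : s⁻¹ = 1 := by
    have := congrArg (fun w => (b : G)⁻¹ * w) h2
    simpa [mul_assoc] using this
  simpa using congrArg (·⁻¹) this

lemma eq_one_of_lstab {t : ℕ} (ht : t.Prime) {S : Set G}
    (hcard : ¬ t ∣ Nat.card S) {s : G} (hs : s ∈ lstab S)
    (hord : ∃ m : ℕ, orderOf s = t ^ m) : s = 1 := by
  haveI : Fact t.Prime := ⟨ht⟩
  obtain ⟨m, hm⟩ := hord
  have hz : Subgroup.zpowers s ≤ lstab S := Subgroup.zpowers_le.mpr hs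
  letI : SMul (Subgroup.zpowers s) S := ⟨fun γ b => ⟨(γ : G) * (b : G), by
    have hmem : (fun w => (γ : G) * w) '' S = S := mem_lstab.mp (hz γ.2)
    have h2 : (γ : G) * (b : G) ∈ (fun w => (γ : G) * w) '' S := ⟨b, b.2, rfl⟩
    rwa [hmem] at h2⟩⟩
  letI : MulAction (Subgroup.zpowers s) S :=
    { one_smul := by intro b; ext; show (1 : G) * (b : G) = b; simp
      mul_smul := by
        intro γ δ b; ext
        show ((γ : G) * δ) * (b : G) = (γ : G) * ((δ : G) * (b : G))
        group }
  have hp : IsPGroup t (Subgroup.zpowers s) :=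
    IsPGroup.of_card (n := m) (by rw [Nat.card_zpowers, hm])
  have hfix := hp.nonempty_fixed_point_of_prime_not_dvd_card S (by simpa using hcard)
  obtain ⟨b, hb⟩ := hfix
  have h1 : (⟨s, Subgroup.mem_zpowers s⟩ : Subgroup.zpowers s) • b = b := hb _
  have h2 : s * (b : G) = (b : G) := congrArg Subtype.val h1
  have := congrArg (fun w => w * (b : G)⁻¹) h2
  simpa using this


section SylowPart
variable [Finite G]

lemma finite_sylow (t : ℕ) : Finite (Sylow t G) :=
  Finite.of_injective (fun P : Sylow t G => ((P : Subgroup G) : Set G))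
    (fun P Q h => Sylow.ext (SetLike.coe_injective h))

/-- A subgroup whose index is prime to `t` contains a Sylow `t`-subgroup of `G`. -/
lemma exists_sylow_le {t : ℕ} (ht : t.Prime) {H : Subgroup G} (h : ¬ t ∣ H.index) :
    ∃ R : Sylow t G, (R : Subgroup G) ≤ H := by
  haveI : Fact t.Prime := ⟨ht⟩
  obtain ⟨R₀⟩ := (Sylow.nonempty : Nonempty (Sylow t H))
  have hK : IsPGroup t (R₀.1.map H.subtype) := R₀.2.map H.subtype
  obtain ⟨T, hT⟩ := hK.exists_le_sylow
  have hcard1 : Nat.card (R₀.1.map H.subtype) = Nat.card R₀.1 :=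
    (Nat.card_congr (Subgroup.equivMapOfInjective R₀.1 H.subtype H.subtype_injective).toEquiv).symm
  have hfact : (Nat.card H).factorization t = (Nat.card G).factorization t := by
    have hGcard : Nat.card H * H.index = Nat.card G := Subgroup.card_mul_index H
    have h1 : Nat.card H ≠ 0 := Nat.card_pos.ne'
    have h2 : H.index ≠ 0 := Subgroup.index_ne_zero_of_finite
    rw [← hGcard, Nat.factorization_mul h1 h2]
    simp [Nat.factorization_eq_zero_of_not_dvd h]
  have hcard2 : Nat.card (R₀.1.map H.subtype) = Nat.card T := by
    rw [hcard1, R₀.card_eq_multiplicity, T.card_eq_multiplicity, hfact]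
  have heq : R₀.1.map H.subtype = (T : Subgroup G) := by
    have : ((R₀.1.map H.subtype : Subgroup G) : Set G) = ((T : Subgroup G) : Set G) := by
      apply Set.eq_of_subset_of_ncard_le hT
      rw [← Nat.card_coe_set_eq, ← Nat.card_coe_set_eq]
      exact le_of_eq hcard2.symm
    exact SetLike.coe_injective this
  exact ⟨T, heq ▸ Subgroup.map_subtype_le R₀.1⟩

/-- A `t`-element centralized by a Sylow `t`-subgroup lies in it. -/
lemma mem_sylow_of_centralizing {t : ℕ} {x : G} (R : Sylow t G)
    (hR : (R : Subgroup G) ≤ Subgroup.centralizer {x}) (hx : ∃ n : ℕ, orderOf x = t ^ n) :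
    x ∈ (R : Subgroup G) := by
  obtain ⟨n, hn⟩ := hx
  have hzp : IsPGroup t (Subgroup.zpowers x) :=
    IsPGroup.of_card (n := n) (by rw [Nat.card_zpowers, hn])
  have hnorm : Subgroup.zpowers x ≤ Subgroup.normalizer ((R : Subgroup G) : Set G) := by
    rw [Subgroup.zpowers_le]
    rw [Subgroup.mem_normalizer_iff]
    intro r
    constructor
    · intro hr
      have hc : x * r = r * x := Subgroup.mem_centralizer_iff.mp (hR hr) x rfl
      have hrw : x * r * x⁻¹ = r := by rw [hc]; group
      rwa [hrw]
    · intro hr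
      have hc : x * (x * r * x⁻¹) = (x * r * x⁻¹) * x :=
        Subgroup.mem_centralizer_iff.mp (hR hr) x rfl
      have hrw : x * r * x⁻¹ = r := by
        have h2 : x * (x * r * x⁻¹) = x * r := by rw [hc]; group
        exact mul_left_cancel h2
      rwa [hrw] at hr
  have hsup : IsPGroup t (((R : Subgroup G) ⊔ Subgroup.zpowers x : Subgroup G)) :=
    IsPGroup.to_sup_of_normal_left' R.2 hzp hnorm
  have hRe := R.3 hsup le_sup_left
  rw [← hRe]
  exact Subgroup.mem_sup_right (Subgroup.mem_zpowers x)

/-- Wielandt's lemma: a `t`-element whose conjugacy class size is a power of `t`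
lies in every Sylow `t`-subgroup. -/
lemma wielandt {t : ℕ} (ht : t.Prime) {x : G} (hx : ∃ n : ℕ, orderOf x = t ^ n)
    {a : ℕ} (hidx : (Subgroup.centralizer {x}).index = t ^ a) (T : Sylow t G) :
    x ∈ (T : Subgroup G) := by
  haveI : Fact t.Prime := ⟨ht⟩
  haveI : Finite (Sylow t G) := finite_sylow t
  obtain ⟨n, hn⟩ := hx
  have hzp : IsPGroup t (Subgroup.zpowers x) :=
    IsPGroup.of_card (n := n) (by rw [Nat.card_zpowers, hn])
  obtain ⟨P, hP⟩ := hzp.exists_le_sylow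
  have hxP : x ∈ (P : Subgroup G) := hP (Subgroup.mem_zpowers x)
  set C := Subgroup.centralizer {x} with hC
  set r := C.relIndex (P : Subgroup G) with hr
  have hrdvd : r ∣ Nat.card (P : Subgroup G) := Subgroup.index_dvd_card _
  obtain ⟨e, -, hre⟩ := (Nat.dvd_prime_pow ht).mp
    (show r ∣ t ^ (Nat.card G).factorization t by
      rw [← P.card_eq_multiplicity]; exact hrdvd)
  haveI hPfin : (P : Subgroup G).FiniteIndex := ⟨Subgroup.index_ne_zero_of_finite⟩
  have hdvd : t ^ a ∣ r * (P : Subgroup G).index := by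
    have h1 : (C ⊓ P).relIndex (P : Subgroup G) * (P : Subgroup G).index = (C ⊓ P).index :=
      Subgroup.relIndex_mul_index inf_le_right
    rw [Subgroup.inf_relIndex_right, ← hr] at h1
    rw [h1, ← hidx]
    exact Subgroup.index_dvd_of_le inf_le_left
  have hndvd : ¬ t ∣ (P : Subgroup G).index := P.not_dvd_index
  have hcop : Nat.Coprime (t ^ a) (P : Subgroup G).index :=
    ((Nat.Prime.coprime_iff_not_dvd ht).mpr hndvd).pow_left a
  have hta : t ^ a ∣ r := hcop.dvd_of_dvd_mul_right hdvd
  have hle : t ^ a ≤ r :=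
    Nat.le_of_dvd (Nat.pos_of_ne_zero Subgroup.index_ne_zero_of_finite) hta
  have hsets : conjOn x (P : Subgroup G) = conjOn x (⊤ : Subgroup G) := by
    apply Set.eq_of_subset_of_ncard_le (conjOn_mono x le_top)
    rw [← Nat.card_coe_set_eq, ← Nat.card_coe_set_eq, card_conjOn_top, card_conjOn,
      hidx]
    exact hle
  have hsub : conjOn x (⊤ : Subgroup G) ⊆ ((P : Subgroup G) : Set G) := by
    rw [← hsets]
    rintro b ⟨g, hg, rfl⟩
    exact mul_mem (mul_mem (inv_mem hg) hxP) hg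
  obtain ⟨g, hg⟩ := MulAction.exists_smul_eq G P T
  rw [← hg]
  have hmem : g⁻¹ * x * g ∈ (P : Subgroup G) := hsub ⟨g, Subgroup.mem_top g, rfl⟩
  show x ∈ ((g • P : Sylow t G) : Subgroup G)
  rw [Sylow.coe_subgroup_smul]
  rw [Subgroup.mem_pointwise_smul_iff_inv_smul_mem]
  convert hmem using 1
  rw [← map_inv MulAut.conj g]
  simp [MulAut.conj_apply, MulAut.smul_def]


omit [Finite G] in
/-- conjugating commutes with Commute. -/
lemma commute_conj {x y : G} (h : Commute x y) (g : G) :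
    Commute (g⁻¹ * x * g) (g⁻¹ * y * g) := by
  have := h.map (MulAut.conj g⁻¹).toMonoidHom
  simpa [MulAut.conj_apply, mul_assoc] using this

omit [Finite G] in
lemma index_centralizer_conj (a g : G) :
    (Subgroup.centralizer {g⁻¹ * a * g}).index = (Subgroup.centralizer {a}).index := by
  have hcomap : Subgroup.centralizer {g⁻¹ * a * g}
      = (Subgroup.centralizer {a}).comap (MulAut.conj g).toMonoidHom := by
    ext h
    rw [Subgroup.mem_comap, Subgroup.mem_centralizer_iff, Subgroup.mem_centralizer_iff]
    constructor
    · intro hc b hb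
      rcases hb with rfl
      have h1 : (g⁻¹ * b * g) * h = h * (g⁻¹ * b * g) := hc _ rfl
      have := congrArg (fun w => g * w * g⁻¹) h1
      show b * (g * h * g⁻¹) = (g * h * g⁻¹) * b
      simpa [mul_assoc, MulAut.conj_apply] using this
    · intro hc b hb
      rcases hb with rfl
      have h1 : a * (g * h * g⁻¹) = (g * h * g⁻¹) * a := hc _ rfl
      have := congrArg (fun w => g⁻¹ * w * g) h1
      show (g⁻¹ * a * g) * h = h * (g⁻¹ * a * g)
      simpa [mul_assoc, MulAut.conj_apply] using this
  rw [hcomap]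
  exact Subgroup.index_comap_of_surjective _ (MulEquiv.surjective _)

/-- A normal `t`-subgroup is contained in every Sylow `t`-subgroup. -/
lemma normal_pgroup_le_sylow {t : ℕ} (ht : t.Prime) {M : Subgroup G} (hM : M.Normal)
    (hMp : IsPGroup t M) (T : Sylow t G) : M ≤ (T : Subgroup G) := by
  haveI : Fact t.Prime := ⟨ht⟩
  haveI : Finite (Sylow t G) := finite_sylow t
  obtain ⟨T₀, hT₀⟩ := hMp.exists_le_sylow
  obtain ⟨g, hg⟩ := MulAction.exists_smul_eq G T₀ T
  intro m hm
  rw [← hg]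
  show m ∈ ((g • T₀ : Sylow t G) : Subgroup G)
  rw [Sylow.coe_subgroup_smul, Subgroup.mem_pointwise_smul_iff_inv_smul_mem]
  refine hT₀ ?_
  have key : (MulAut.conj g)⁻¹ • m = g⁻¹ * m * g := by
    rw [← map_inv MulAut.conj g]
    simp [MulAut.conj_apply, MulAut.smul_def]
  rw [key]
  simpa using hM.conj_mem m hm g⁻¹

/-- If all conjugates of `x` by elements of the centralizer of `y` give the whole class and
`x` commutes with `y`, then every conjugate of `x` commutes with `y`. -/
lemma conj_commute_of_coprime {x y : G}
    (hcop : Nat.Coprime (Subgroup.centralizer {x}).index (Subgroup.centralizer {y}).index)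
    (hxy : Commute x y) (g : G) : Commute (g⁻¹ * x * g) y := by
  have hset := conjOn_centralizer_eq_top (a := x) (b := y) hcop
  have hmem : g⁻¹ * x * g ∈ conjOn x (Subgroup.centralizer {y}) := by
    rw [hset]; exact ⟨g, Subgroup.mem_top g, rfl⟩
  obtain ⟨d, hd, hde⟩ := hmem
  rw [← hde]
  have hdy : d⁻¹ * y * d = y := by
    have h1 : y * d = d * y := Subgroup.mem_centralizer_iff.mp hd y rfl
    rw [mul_assoc, h1, ← mul_assoc]
    simp
  have := commute_conj hxy d
  rwa [hdy] at this


omit [Finite G] in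
lemma mem_centralizer_single {a g : G} : g ∈ Subgroup.centralizer {a} ↔ Commute a g := by
  rw [Subgroup.mem_centralizer_iff]
  constructor
  · intro h; exact h a rfl
  · intro h b hb
    rw [Set.mem_singleton_iff] at hb; subst hb; exact h

omit [Finite G] in
lemma center_of_centralizer_top {x : G} (h : Subgroup.centralizer {x} = ⊤) :
    x ∈ Subgroup.center G := by
  rw [Subgroup.mem_center_iff]
  intro g
  have hg : g ∈ Subgroup.centralizer {x} := by rw [h]; exact Subgroup.mem_top g
  exact (mem_centralizer_single.mp hg).symm

omit [Finite G] in
lemma centralizer_inf_le_mul {x y : G} :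
    Subgroup.centralizer {x} ⊓ Subgroup.centralizer {y} ≤ Subgroup.centralizer {x * y} := by
  rintro g ⟨hgx, hgy⟩
  exact mem_centralizer_single.mpr
    ((mem_centralizer_single.mp hgx).mul_left (mem_centralizer_single.mp hgy))

omit [Finite G] in
lemma centralizer_inf_le_left {x y : G} :
    Subgroup.centralizer {x * y} ⊓ Subgroup.centralizer {y} ≤ Subgroup.centralizer {x} := by
  rintro g ⟨hgz, hgy⟩
  refine mem_centralizer_single.mpr ?_
  have h := (mem_centralizer_single.mp hgz).mul_left (mem_centralizer_single.mp hgy).inv_left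
  rwa [mul_inv_cancel_right] at h

omit [Finite G] in
lemma centralizer_inf_le_right {x y : G} :
    Subgroup.centralizer {x * y} ⊓ Subgroup.centralizer {x} ≤ Subgroup.centralizer {y} := by
  rintro g ⟨hgz, hgx⟩
  refine mem_centralizer_single.mpr ?_
  have h := (mem_centralizer_single.mp hgx).inv_left.mul_left (mem_centralizer_single.mp hgz)
  rwa [inv_mul_cancel_left] at h


lemma kazarin_case {t u v : ℕ} (ht : t.Prime) (hu : u.Prime) (hv : v.Prime) (huv : u ≠ v)
    {x y : G} (hx : x ∉ Subgroup.center G) (hy : y ∉ Subgroup.center G)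
    (hxt : ∃ n : ℕ, orderOf x = t ^ n) (hyt : ∃ n : ℕ, orderOf y = t ^ n)
    {i j k : ℕ} (hi : (Subgroup.centralizer {x}).index = u ^ i)
    (hj : (Subgroup.centralizer {y}).index = v ^ j)
    (hk : (Subgroup.centralizer {x * y}).index = u ^ k) :
    u = t ∧ (Subgroup.centralizer {x * y}).index = u ^ i ∧ v ^ j ≤ u ^ i ∧
      (∀ T : Sylow t G, x ∈ (T : Subgroup G)) ∧ (∀ T : Sylow t G, y ∈ (T : Subgroup G)) := by
  have hine : i ≠ 0 := by
    intro h0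
    rw [h0, pow_zero] at hi
    exact hx (center_of_centralizer_top (Subgroup.index_eq_one.mp hi))
  have hjne : j ≠ 0 := by
    intro h0
    rw [h0, pow_zero] at hj
    exact hy (center_of_centralizer_top (Subgroup.index_eq_one.mp hj))
  have hcop0 : Nat.Coprime u v := (Nat.coprime_primes hu hv).mpr huv
  have hcop : Nat.Coprime (u ^ i) (v ^ j) := Nat.Coprime.pow i j hcop0
  have hcopk : Nat.Coprime (u ^ k) (v ^ j) := Nat.Coprime.pow k j hcop0
  -- index of the intersection
  have hPidx : (Subgroup.centralizer {x} ⊓ Subgroup.centralizer {y}).index = u ^ i * v ^ j := by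
    rw [index_inf_of_coprime (by rw [hi, hj]; exact hcop), hi, hj]
  have hQidx : (Subgroup.centralizer {x * y} ⊓ Subgroup.centralizer {y}).index
      = u ^ k * v ^ j := by
    rw [index_inf_of_coprime (by rw [hk, hj]; exact hcopk), hk, hj]
  have hCzCy : Subgroup.centralizer {x * y} ⊓ Subgroup.centralizer {y}
      = Subgroup.centralizer {x} ⊓ Subgroup.centralizer {y} :=
    le_antisymm (le_inf centralizer_inf_le_left inf_le_right)
      (le_inf centralizer_inf_le_mul inf_le_right)
  have hCzCx : Subgroup.centralizer {x * y} ⊓ Subgroup.centralizer {x}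
      = Subgroup.centralizer {y} ⊓ Subgroup.centralizer {x} :=
    le_antisymm (le_inf centralizer_inf_le_right inf_le_right)
      (le_inf (fun g hg => centralizer_inf_le_mul ⟨hg.2, hg.1⟩) inf_le_right)
  -- k = i
  have hki : k = i := by
    have h1 : u ^ k ∣ u ^ i * v ^ j := by
      rw [← hk, ← hPidx]
      exact Subgroup.index_dvd_of_le centralizer_inf_le_mul
    have h2 : u ^ i ∣ u ^ k * v ^ j := by
      rw [← hi, ← hQidx]
      exact Subgroup.index_dvd_of_le centralizer_inf_le_left
    exact le_antisymm
      ((Nat.pow_dvd_pow_iff_le_right hu.one_lt).mp (hcopk.dvd_of_dvd_mul_right h1))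
      ((Nat.pow_dvd_pow_iff_le_right hu.one_lt).mp (hcop.dvd_of_dvd_mul_right h2))
  -- relindex of C(xy) in C(x) is v ^ j
  have hrel : (Subgroup.centralizer {x * y}).relIndex (Subgroup.centralizer {x}) = v ^ j := by
    have h1 := Subgroup.relIndex_mul_index
      (show Subgroup.centralizer {x * y} ⊓ Subgroup.centralizer {x} ≤ Subgroup.centralizer {x}
        from inf_le_right)
    rw [Subgroup.inf_relIndex_right, hCzCx,
      index_inf_of_coprime (by rw [hi, hj]; exact hcop.symm), hi, hj] at h1
    exact Nat.eq_of_mul_eq_mul_right (pow_pos hu.pos i) h1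
  -- v ^ j ≤ u ^ i
  have hvj_le : v ^ j ≤ u ^ i := by
    have h1 : Nat.card (conjOn (x * y) (Subgroup.centralizer {x})) = v ^ j := by
      rw [card_conjOn, hrel]
    have h2 : Nat.card (conjOn (x * y) (⊤ : Subgroup G)) = u ^ i := by
      rw [card_conjOn_top, hk, hki]
    calc v ^ j = (conjOn (x * y) (Subgroup.centralizer {x})).ncard := by
          rw [← Nat.card_coe_set_eq, h1]
      _ ≤ (conjOn (x * y) (⊤ : Subgroup G)).ncard :=
          Set.ncard_le_ncard (conjOn_mono _ le_top) (Set.toFinite _)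
      _ = u ^ i := by rw [← Nat.card_coe_set_eq, h2]
  -- main claim : u = t
  have hut : u = t := by
    by_contra hut
    have hndvd_ui : ¬ t ∣ u ^ i := by
      intro hdvd
      exact hut ((Nat.prime_dvd_prime_iff_eq ht hu).mp (ht.dvd_of_dvd_pow hdvd)).symm
    -- x and y commute
    have hcomm : Commute x y := by
      by_cases hvt : v = t
      · have hyall : ∀ T : Sylow t G, y ∈ (T : Subgroup G) :=
          fun T => wielandt ht hyt (by rw [hj, hvt]) T
        obtain ⟨T₀, hT₀⟩ := exists_sylow_le ht
          (H := Subgroup.centralizer {x}) (by rw [hi]; exact hndvd_ui)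
        exact mem_centralizer_single.mp (hT₀ (hyall T₀))
      · have hndvd : ¬ t ∣ (Subgroup.centralizer {x} ⊓ Subgroup.centralizer {y}).index := by
          rw [hPidx]
          intro hdvd
          rcases (Nat.Prime.dvd_mul ht).mp hdvd with h | h
          · exact hndvd_ui h
          · exact hvt ((Nat.prime_dvd_prime_iff_eq ht hv).mp (ht.dvd_of_dvd_pow h)).symm
        obtain ⟨R, hR⟩ := exists_sylow_le ht hndvd
        have hxR : x ∈ (R : Subgroup G) :=
          mem_sylow_of_centralizing R (hR.trans inf_le_left) hxt
        exact (mem_centralizer_single.mp ((hR.trans inf_le_right) hxR)).symm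
    have hcommz : Commute (x * y) y := hcomm.mul_left (Commute.refl y)
    -- all conjugates of x (resp. xy) commute with y
    have hxy_all : ∀ g : G, Commute (g⁻¹ * x * g) y :=
      conj_commute_of_coprime (by rw [hi, hj]; exact hcop) hcomm
    have hzy_all : ∀ g : G, Commute (g⁻¹ * (x * y) * g) y :=
      conj_commute_of_coprime (by rw [hk, hj]; exact hcopk) hcommz
    have hxy_all2 : ∀ g h : G, Commute (g⁻¹ * x * g) (h⁻¹ * y * h) := by
      intro g h
      have h2 := commute_conj (hxy_all (g * h⁻¹)) h
      have e : h⁻¹ * ((g * h⁻¹)⁻¹ * x * (g * h⁻¹)) * h = g⁻¹ * x * g := by group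
      rwa [e] at h2
    have hzy_all2 : ∀ g h : G, Commute (g⁻¹ * (x * y) * g) (h⁻¹ * y * h) := by
      intro g h
      have h2 := commute_conj (hzy_all (g * h⁻¹)) h
      have e : h⁻¹ * ((g * h⁻¹)⁻¹ * (x * y) * (g * h⁻¹)) * h = g⁻¹ * (x * y) * g := by group
      rwa [e] at h2
    have hyy_all : ∀ h : G, Commute (h⁻¹ * y * h) y := by
      intro h
      have e : y = (x⁻¹ * x) * y := by group
      have h2 : Commute (h⁻¹ * y * h) ((1:G)⁻¹ * y * 1) := by
        have e2 : h⁻¹ * y * h = (h⁻¹ * x * h)⁻¹ * (h⁻¹ * (x * y) * h) := by group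
        rw [e2]
        exact ((hxy_all2 h 1).inv_left).mul_left (hzy_all2 h 1)
      simpa using h2
    -- the translation identities
    have hXeq : conjOn x (Subgroup.centralizer {y}) = conjOn x ⊤ :=
      conjOn_centralizer_eq_top (by rw [hi, hj]; exact hcop)
    have hZeq : conjOn (x * y) (Subgroup.centralizer {y}) = conjOn (x * y) ⊤ :=
      conjOn_centralizer_eq_top (by rw [hk, hj]; exact hcopk)
    have htrans : conjOn (x * y) (Subgroup.centralizer {y})
        = (fun b => b * y) '' conjOn x (Subgroup.centralizer {y}) := by
      ext b
      constructor
      · rintro ⟨d, hd, rfl⟩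
        refine ⟨d⁻¹ * x * d, ⟨d, hd, rfl⟩, ?_⟩
        have h1 : y * d = d * y := mem_centralizer_single.mp hd
        show (d⁻¹ * x * d) * y = d⁻¹ * (x * y) * d
        rw [show d⁻¹ * (x * y) * d = d⁻¹ * x * (y * d) by group, h1]
        group
      · rintro ⟨c, ⟨d, hd, rfl⟩, rfl⟩
        refine ⟨d, hd, ?_⟩
        have h1 : y * d = d * y := mem_centralizer_single.mp hd
        show d⁻¹ * (x * y) * d = (d⁻¹ * x * d) * y
        rw [show d⁻¹ * (x * y) * d = d⁻¹ * x * (y * d) by group, h1]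
        group
    have hZXy : conjOn (x * y) ⊤ = (fun b => b * y) '' conjOn x ⊤ := by
      rw [← hXeq, ← hZeq, htrans]
    have htrans_h : ∀ h : G,
        (fun b => b * (h⁻¹ * y * h)) '' conjOn x ⊤ = conjOn (x * y) ⊤ := by
      intro h
      calc (fun b => b * (h⁻¹ * y * h)) '' conjOn x ⊤
          = (fun b => b * (h⁻¹ * y * h)) '' ((fun b => h⁻¹ * b * h) '' conjOn x ⊤) := by
            rw [conjOn_top_conj_image x h]
        _ = (fun b => h⁻¹ * (b * y) * h) '' conjOn x ⊤ := by
            rw [Set.image_image]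
            congr 1
            funext b
            group
        _ = (fun b => h⁻¹ * b * h) '' ((fun b => b * y) '' conjOn x ⊤) := by
            rw [Set.image_image]
        _ = (fun b => h⁻¹ * b * h) '' conjOn (x * y) ⊤ := by rw [← hZXy]
        _ = conjOn (x * y) ⊤ := conjOn_top_conj_image (x * y) h
    -- hence each h⁻¹yh * y⁻¹ stabilizes the class of x on the right
    have hs_mem : ∀ h : G, (h⁻¹ * y * h) * y⁻¹ ∈ rstab (conjOn x ⊤) := by
      intro h
      rw [mem_rstab]
      calc (fun s => s * ((h⁻¹ * y * h) * y⁻¹)) '' conjOn x ⊤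
          = (fun s => s * y⁻¹) '' ((fun s => s * (h⁻¹ * y * h)) '' conjOn x ⊤) := by
            rw [Set.image_image]
            congr 1
            funext b
            group
        _ = (fun s => s * y⁻¹) '' conjOn (x * y) ⊤ := by rw [htrans_h h]
        _ = (fun s => s * y⁻¹) '' ((fun b => b * y) '' conjOn x ⊤) := by rw [← hZXy]
        _ = conjOn x ⊤ := by rw [Set.image_image]; simp
    -- each such element is a t-element
    have hs_ord : ∀ h : G, ∃ m : ℕ, orderOf ((h⁻¹ * y * h) * y⁻¹) = t ^ m := by
      intro h
      obtain ⟨n, hn⟩ := hyt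
      have hconj_ord : orderOf (h⁻¹ * y * h) = t ^ n := by
        have e := orderOf_injective (MulAut.conj h⁻¹).toMonoidHom
          (MulEquiv.injective (MulAut.conj h⁻¹)) y
        have e2 : (MulAut.conj h⁻¹).toMonoidHom y = h⁻¹ * y * h := by
          simp [MulAut.conj_apply]
        rw [e2] at e
        rw [e, hn]
      have hcomm2 : Commute (h⁻¹ * y * h) y⁻¹ := (hyy_all h).inv_right
      have hdvd := hcomm2.orderOf_mul_dvd_lcm
      rw [hconj_ord, orderOf_inv, hn, Nat.lcm_self] at hdvd
      exact (Nat.dvd_prime_pow ht).mp hdvd |>.imp (fun m hm => hm.2)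
    -- conclude y is central, contradiction
    have hycentral : y ∈ Subgroup.center G := by
      rw [Subgroup.mem_center_iff]
      intro g
      have hcard : ¬ t ∣ Nat.card (conjOn x ⊤ : Set G) := by
        rw [card_conjOn_top, hi]
        exact hndvd_ui
      have h1 : (g⁻¹ * y * g) * y⁻¹ = 1 :=
        eq_one_of_rstab ht hcard (hs_mem g) (hs_ord g)
      have h2 : g⁻¹ * y * g = y := by
        have := congrArg (fun w => w * y) h1
        simpa using this
      have := congrArg (fun w => g * w) h2
      simpa [mul_assoc] using this.symm
    exact hy hycentral
  -- now u = t : apply Wielandt twice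
  subst hut
  have hxall : ∀ T : Sylow u G, x ∈ (T : Subgroup G) := fun T => wielandt ht hxt hi T
  obtain ⟨n, hn⟩ := hyt
  have hzpy : IsPGroup u (Subgroup.zpowers y) :=
    IsPGroup.of_card (n := n) (by rw [Nat.card_zpowers, hn])
  obtain ⟨P₀, hP₀⟩ := hzpy.exists_le_sylow
  have hzP₀ : x * y ∈ (P₀ : Subgroup G) :=
    mul_mem (hxall P₀) (hP₀ (Subgroup.mem_zpowers y))
  have hzt : ∃ m : ℕ, orderOf (x * y) = u ^ m := by
    obtain ⟨m, hm⟩ := P₀.2 ⟨x * y, hzP₀⟩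
    have hdvd : orderOf (x * y) ∣ u ^ m := by
      apply orderOf_dvd_of_pow_eq_one
      have := congrArg (Subtype.val) hm
      simpa using this
    exact ((Nat.dvd_prime_pow ht).mp hdvd).imp (fun m hm => hm.2)
  have hzall : ∀ T : Sylow u G, x * y ∈ (T : Subgroup G) := fun T => wielandt ht hzt hk T
  have hyall : ∀ T : Sylow u G, y ∈ (T : Subgroup G) := by
    intro T
    have := mul_mem (inv_mem (hxall T)) (hzall T)
    simpa [mul_assoc] using this
  exact ⟨rfl, by rw [hk, hki], hvj_le, hxall, hyall⟩


/-- The `t`-core: intersection of all Sylow `t`-subgroups, with its properties. -/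
lemma tcore_spec {t : ℕ} (ht : t.Prime) :
    ∃ N : Subgroup G, N.Normal ∧ IsPGroup t N ∧
      (∀ M : Subgroup G, M.Normal → IsPGroup t M → M ≤ N) ∧
      (∀ g : G, (∀ T : Sylow t G, g ∈ (T : Subgroup G)) → g ∈ N) := by
  haveI : Fact t.Prime := ⟨ht⟩
  haveI : Finite (Sylow t G) := finite_sylow t
  refine ⟨⨅ T : Sylow t G, (T : Subgroup G), ?_, ?_, ?_, ?_⟩
  · constructor
    intro n hn g
    rw [Subgroup.mem_iInf] at hn ⊢
    intro T
    have hn' : n ∈ ((g⁻¹ • T : Sylow t G) : Subgroup G) := hn _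
    rw [Sylow.coe_subgroup_smul, Subgroup.mem_pointwise_smul_iff_inv_smul_mem] at hn'
    have key : (MulAut.conj g⁻¹)⁻¹ • n = g * n * g⁻¹ := by
      rw [← map_inv MulAut.conj g⁻¹]
      simp [MulAut.conj_apply, MulAut.smul_def]
    rwa [key] at hn'
  · have T₀ : Sylow t G := Classical.arbitrary _
    exact IsPGroup.to_le T₀.2 (iInf_le _ T₀)
  · intro M hM hMp
    exact le_iInf fun T => normal_pgroup_le_sylow ht hM hMp T
  · intro g hg
    rw [Subgroup.mem_iInf]
    exact hg

lemma sylow_nonabelian {t : ℕ} (ht : t.Prime) {x : G}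
    (hxall : ∀ T : Sylow t G, x ∈ (T : Subgroup G))
    (hdvd : t ∣ (Subgroup.centralizer {x}).index) :
    ∀ T : Sylow t G, ¬ ∀ a ∈ (T : Subgroup G), ∀ b ∈ (T : Subgroup G), a * b = b * a := by
  haveI : Fact t.Prime := ⟨ht⟩
  haveI : Finite (Sylow t G) := finite_sylow t
  intro T hab
  have hTle : (T : Subgroup G) ≤ Subgroup.centralizer {x} := by
    intro g hg
    exact mem_centralizer_single.mpr (hab x (hxall T) g hg)
  have hd2 : (Subgroup.centralizer {x}).index ∣ (T : Subgroup G).index :=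
    Subgroup.index_dvd_of_le hTle
  haveI : (T : Subgroup G).FiniteIndex := ⟨Subgroup.index_ne_zero_of_finite⟩
  exact T.not_dvd_index (hdvd.trans hd2)

end SylowPart
end KazarinAux



/-- Kazarin's lemma: if `x, y` are non-central `t`-elements of a finite group `G` such that
`|x^G|` and `|y^G|` are powers of two distinct primes and `|(xy)^G|` is a prime power, then
`⟨x, y⟩` is contained in `O_t(G)` (the largest normal `t`-subgroup of `G`), and
`|(xy)^G| = max{|x^G|, |y^G|}` is a power of `t`; in particular every Sylow `t`-subgroup of
`G` is nonabelian. -/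
theorem stmt_15 (G : Type*) [Group G] [Finite G] (t : ℕ) (ht : t.Prime) (x y : G)
    (hx : x ∉ Subgroup.center G) (hy : y ∉ Subgroup.center G)
    (hxt : ∃ k : ℕ, orderOf x = t ^ k) (hyt : ∃ k : ℕ, orderOf y = t ^ k)
    (u v : ℕ) (hu : u.Prime) (hv : v.Prime) (huv : u ≠ v)
    (hxu : ∃ i : ℕ, (Subgroup.centralizer {x} : Subgroup G).index = u ^ i)
    (hyv : ∃ j : ℕ, (Subgroup.centralizer {y} : Subgroup G).index = v ^ j)
    (hxy : ∃ (w k : ℕ), w.Prime ∧ (Subgroup.centralizer {x * y} : Subgroup G).index = w ^ k) :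
    (∃ N : Subgroup G, N.Normal ∧ IsPGroup t N ∧
      (∀ M : Subgroup G, M.Normal → IsPGroup t M → M ≤ N) ∧
      Subgroup.closure {x, y} ≤ N) ∧
    (Subgroup.centralizer {x * y} : Subgroup G).index =
      max (Subgroup.centralizer {x} : Subgroup G).index
        (Subgroup.centralizer {y} : Subgroup G).index ∧
    (∃ k : ℕ, (Subgroup.centralizer {x * y} : Subgroup G).index = t ^ k) ∧
    ∀ T : Sylow t G, ¬ ∀ a ∈ (T : Subgroup G), ∀ b ∈ (T : Subgroup G), a * b = b * a := by
  open KazarinAux in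
  obtain ⟨i, hi⟩ := hxu
  obtain ⟨j, hj⟩ := hyv
  obtain ⟨w, k, hw, hk⟩ := hxy
  have hine : i ≠ 0 := by
    intro h0
    rw [h0, pow_zero] at hi
    exact hx (KazarinAux.center_of_centralizer_top (Subgroup.index_eq_one.mp hi))
  have hjne : j ≠ 0 := by
    intro h0
    rw [h0, pow_zero] at hj
    exact hy (KazarinAux.center_of_centralizer_top (Subgroup.index_eq_one.mp hj))
  -- x * y is not central, so k ≠ 0
  have hkne : k ≠ 0 := by
    intro h0
    rw [h0, pow_zero] at hk
    have hz : x * y ∈ Subgroup.center G :=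
      KazarinAux.center_of_centralizer_top (Subgroup.index_eq_one.mp hk)
    -- then the centralizers of x and y coincide
    have hCeq : Subgroup.centralizer {x} = Subgroup.centralizer {y} := by
      have hzc : ∀ g : G, Commute (x * y) g := fun g =>
        KazarinAux.mem_centralizer_single.mp (by
          rw [Subgroup.index_eq_one.mp hk]; exact Subgroup.mem_top g)
      ext g
      rw [KazarinAux.mem_centralizer_single, KazarinAux.mem_centralizer_single]
      constructor
      · intro hc
        have h2 := (hc.inv_left).mul_left (hzc g)
        rwa [inv_mul_cancel_left] at h2
      · intro hc
        have h2 := (hzc g).mul_left hc.inv_left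
        rwa [mul_inv_cancel_right] at h2
    rw [hCeq, hj] at hi
    have : u ∣ v ^ j := hi ▸ dvd_pow_self u hine
    exact huv ((Nat.prime_dvd_prime_iff_eq hu hv).mp (hu.dvd_of_dvd_pow this))
  -- w = u or w = v
  have hwuv : w = u ∨ w = v := by
    have hdvd : w ^ k ∣ u ^ i * v ^ j := by
      rw [← hk]
      have h1 : Subgroup.centralizer {x} ⊓ Subgroup.centralizer {y}
          ≤ Subgroup.centralizer {x * y} := KazarinAux.centralizer_inf_le_mul
      have h2 := Subgroup.index_dvd_of_le h1
      rwa [KazarinAux.index_inf_of_coprime (by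
        rw [hi, hj]
        exact Nat.Coprime.pow i j ((Nat.coprime_primes hu hv).mpr huv)), hi, hj] at h2
    have hwdvd : w ∣ u ^ i * v ^ j := (dvd_pow_self w hkne).trans hdvd
    rcases (Nat.Prime.dvd_mul hw).mp hwdvd with h | h
    · exact Or.inl ((Nat.prime_dvd_prime_iff_eq hw hu).mp (hw.dvd_of_dvd_pow h))
    · exact Or.inr ((Nat.prime_dvd_prime_iff_eq hw hv).mp (hw.dvd_of_dvd_pow h))
  rcases hwuv with hcase | hcase
  · -- case w = u
    rw [hcase] at hk
    obtain ⟨hut, hidx, hle, hxall, hyall⟩ :=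
      KazarinAux.kazarin_case ht hu hv huv hx hy hxt hyt hi hj hk
    obtain ⟨N, hN1, hN2, hN3, hN4⟩ := KazarinAux.tcore_spec (G := G) ht
    refine ⟨⟨N, hN1, hN2, hN3, ?_⟩, ?_, ?_, ?_⟩
    · rw [Subgroup.closure_le]
      intro a ha
      rcases ha with rfl | ha
      · exact hN4 a hxall
      · rw [Set.mem_singleton_iff] at ha
        subst ha
        exact hN4 a hyall
    · rw [hidx, hi, hj, Nat.max_eq_left hle]
    · exact ⟨i, by rw [hidx, hut]⟩
    · exact KazarinAux.sylow_nonabelian ht hxall (by rw [hi, ← hut]; exact dvd_pow_self u hine)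
  · -- case w = v : apply the case lemma with the roles of x and y swapped
    rw [hcase] at hk
    have hyx : (Subgroup.centralizer {y * x} : Subgroup G).index = v ^ k := by
      have e : y * x = x⁻¹ * (x * y) * x := by group
      rw [e, KazarinAux.index_centralizer_conj, hk]
    obtain ⟨hvt, hidx, hle, hyall, hxall⟩ :=
      KazarinAux.kazarin_case ht hv hu huv.symm hy hx hyt hxt hj hi hyx
    have hidx' : (Subgroup.centralizer {x * y} : Subgroup G).index = v ^ j := by
      have e : x * y = y⁻¹ * (y * x) * y := by group
      rw [e, KazarinAux.index_centralizer_conj, hidx]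
    obtain ⟨N, hN1, hN2, hN3, hN4⟩ := KazarinAux.tcore_spec (G := G) ht
    refine ⟨⟨N, hN1, hN2, hN3, ?_⟩, ?_, ?_, ?_⟩
    · rw [Subgroup.closure_le]
      intro a ha
      rcases ha with rfl | ha
      · exact hN4 a hxall
      · rw [Set.mem_singleton_iff] at ha
        subst ha
        exact hN4 a hyall
    · rw [hidx', hi, hj, Nat.max_eq_right hle]
    · exact ⟨j, by rw [hidx', hvt]⟩
    · exact KazarinAux.sylow_nonabelian ht hyall (by rw [hj, ← hvt]; exact dvd_pow_self v hjne)
end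

section
/- Let G be a finite group and x, y ∈ G with gcd(|x^G|, |y^G|) = 1. Then G = C_G(x)·C_G(y), the conjugacy class of xy equals the setwise product x^G·y^G, and |(xy)^G| divides |x^G|·|y^G|. -/
open Pointwise

theorem aux_index_inf_eq {G : Type*} [Group G] [Finite G] (H K : Subgroup G)
    (h : Nat.Coprime H.index K.index) : (H ⊓ K).index = H.index * K.index := by
  have hpos : (H ⊓ K).index ≠ 0 := Subgroup.index_ne_zero_of_finite
  exact le_antisymm Subgroup.index_inf_le
    (Nat.le_of_dvd (Nat.pos_of_ne_zero hpos)
      (h.mul_dvd_of_dvd_of_dvd (Subgroup.index_dvd_of_le inf_le_left)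
        (Subgroup.index_dvd_of_le inf_le_right)))

theorem aux_mul_eq_univ {G : Type*} [Group G] [Finite G] (H K : Subgroup G)
    (h : Nat.Coprime H.index K.index) : (H : Set G) * (K : Set G) = Set.univ := by
  have h1 : (H ⊓ K).index = H.index * K.index := aux_index_inf_eq H K h
  have h2 : K.relIndex H = K.index := by
    have h3 := Subgroup.relIndex_mul_index (inf_le_left : H ⊓ K ≤ H)
    rw [Subgroup.inf_relIndex_left] at h3
    have hH : H.index ≠ 0 := Subgroup.index_ne_zero_of_finite
    apply Nat.eq_of_mul_eq_mul_right (Nat.pos_of_ne_zero hH)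
    rw [h3, h1, mul_comm]
  let φ : H ⧸ K.subgroupOf H → G ⧸ K := Quotient.map' Subtype.val (fun a b hab => by
    rw [QuotientGroup.leftRel_apply] at hab ⊢
    exact hab)
  have hinj : Function.Injective φ := by
    intro a b
    induction a using Quotient.inductionOn'
    induction b using Quotient.inductionOn'
    intro hab
    simp only [φ, Quotient.map'_mk''] at hab
    rw [QuotientGroup.eq] at hab
    exact Quotient.sound' (QuotientGroup.leftRel_apply.mpr hab)
  have hcard : Nat.card (H ⧸ K.subgroupOf H) = Nat.card (G ⧸ K) := h2
  have hsurj : Function.Surjective φ :=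
    ((Nat.bijective_iff_injective_and_card φ).mpr ⟨hinj, hcard⟩).2
  ext g
  simp only [Set.mem_univ, iff_true]
  obtain ⟨q, hq⟩ := hsurj (QuotientGroup.mk g : G ⧸ K)
  induction q using Quotient.inductionOn' with
  | h a =>
    simp only [φ, Quotient.map'_mk''] at hq
    have : (a : G)⁻¹ * g ∈ K := QuotientGroup.eq.mp hq
    exact ⟨a, a.2, (a : G)⁻¹ * g, this, by group⟩

/-- If `x, y` are elements of a finite group `G` with coprime conjugacy class sizes, then
`G = C_G(x)·C_G(y)`, the conjugacy class of `xy` is the setwise product `x^G · y^G`, and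
`|(xy)^G|` divides `|x^G|·|y^G|`. -/
theorem stmt_17 (G : Type*) [Group G] [Finite G] (x y : G)
    (h : Nat.Coprime (Subgroup.centralizer {x} : Subgroup G).index
      (Subgroup.centralizer {y} : Subgroup G).index) :
    (Subgroup.centralizer {x} : Set G) * (Subgroup.centralizer {y} : Set G) = Set.univ ∧
    {z : G | IsConj (x * y) z} = {z : G | IsConj x z} * {z : G | IsConj y z} ∧
    (Subgroup.centralizer {x * y} : Subgroup G).index ∣
      (Subgroup.centralizer {x} : Subgroup G).index *
        (Subgroup.centralizer {y} : Subgroup G).index := by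
  set Cx := (Subgroup.centralizer {x} : Subgroup G) with hCx
  set Cy := (Subgroup.centralizer {y} : Subgroup G) with hCy
  have huniv : (Cx : Set G) * (Cy : Set G) = Set.univ := aux_mul_eq_univ Cx Cy h
  refine ⟨huniv, ?_, ?_⟩
  · ext z
    simp only [Set.mem_setOf_eq, Set.mem_mul]
    constructor
    · intro hc
      obtain ⟨g, hg⟩ := isConj_iff.mp hc
      refine ⟨g * x * g⁻¹, isConj_iff.mpr ⟨g, rfl⟩, g * y * g⁻¹, isConj_iff.mpr ⟨g, rfl⟩, ?_⟩
      rw [← hg]; group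
    · rintro ⟨u, hu, v, hv, rfl⟩
      obtain ⟨a, ha⟩ := isConj_iff.mp hu
      obtain ⟨b, hb⟩ := isConj_iff.mp hv
      have hmem : a⁻¹ * b ∈ (Cx : Set G) * (Cy : Set G) := huniv ▸ Set.mem_univ _
      obtain ⟨c, hc, d, hd, hcd⟩ := hmem
      have hcd' : c * d = a⁻¹ * b := hcd
      have hcx : c * x = x * c :=
        Subgroup.mem_centralizer_singleton_iff.mp (SetLike.mem_coe.mp hc)
      have hdy : d * y = y * d :=
        Subgroup.mem_centralizer_singleton_iff.mp (SetLike.mem_coe.mp hd)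
      set g := a * c with hgdef
      have hg1 : g * x * g⁻¹ = a * x * a⁻¹ := by
        have hcxc : c * x * c⁻¹ = x := by rw [hcx]; group
        calc g * x * g⁻¹ = a * (c * x * c⁻¹) * a⁻¹ := by rw [hgdef]; group
        _ = a * x * a⁻¹ := by rw [hcxc]
      have hg2 : g * y * g⁻¹ = b * y * b⁻¹ := by
        have hb' : b = a * c * d := by rw [mul_assoc, hcd']; group
        have hdy' : d⁻¹ * y * d⁻¹⁻¹ = y := by
          rw [inv_inv, mul_assoc, ← hdy]; group
        calc g * y * g⁻¹ = (a * c) * y * (a * c)⁻¹ := by rw [hgdef]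
        _ = (a * c * d) * (d⁻¹ * y * d⁻¹⁻¹) * (a * c * d)⁻¹ := by group
        _ = (a * c * d) * y * (a * c * d)⁻¹ := by rw [hdy']
        _ = b * y * b⁻¹ := by rw [← hb']
      refine isConj_iff.mpr ⟨g, ?_⟩
      calc g * (x * y) * g⁻¹ = (g * x * g⁻¹) * (g * y * g⁻¹) := by group
      _ = a * x * a⁻¹ * (b * y * b⁻¹) := by rw [hg1, hg2]
      _ = u * v := by rw [ha, hb]
  · have hle : Cx ⊓ Cy ≤ Subgroup.centralizer {x * y} := by
      intro g hg
      rw [Subgroup.mem_inf] at hg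
      obtain ⟨hgx, hgy⟩ := hg
      rw [hCx, Subgroup.mem_centralizer_singleton_iff] at hgx
      rw [hCy, Subgroup.mem_centralizer_singleton_iff] at hgy
      rw [Subgroup.mem_centralizer_singleton_iff]
      calc g * (x * y) = (g * x) * y := by rw [mul_assoc]
      _ = (x * g) * y := by rw [hgx]
      _ = x * (g * y) := by rw [mul_assoc]
      _ = x * (y * g) := by rw [hgy]
      _ = (x * y) * g := by rw [mul_assoc]
    calc (Subgroup.centralizer {x * y} : Subgroup G).index
        ∣ (Cx ⊓ Cy).index := Subgroup.index_dvd_of_le hle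
      _ = Cx.index * Cy.index := aux_index_inf_eq Cx Cy h
end

section
/- Let G be a finite group and p a prime. Then p divides no element of cs(G) if and only if G is an internal direct product G = P × O_{p'}(G), where P is an abelian Sylow p-subgroup of G. -/
open MulAction Pointwise

/-- A finite group is not a union of conjugates of a proper subgroup. -/
lemma aux_union_conj {G : Type*} [Group G] [Finite G] (H : Subgroup G)
    (h : ∀ g : G, ∃ x : G, x * g * x⁻¹ ∈ H) : H = ⊤ := by
  classical
  cases nonempty_fintype G
  let β := G ⧸ H
  haveI : Fintype (G ⧸ H) := Fintype.ofFinite _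
  haveI : ∀ a : G, Fintype (fixedBy β a) := fun a => Fintype.ofFinite _
  haveI : Fintype (orbitRel.Quotient G β) := Fintype.ofFinite _
  have hΩ : Fintype.card (orbitRel.Quotient G β) = 1 := by
    rw [Fintype.card_eq_one_iff]
    refine ⟨Quotient.mk'' ((1 : G) : G ⧸ H), fun q => ?_⟩
    induction q using Quotient.inductionOn' with
    | h b =>
      refine Quotient.sound' ?_
      rw [orbitRel_apply, mem_orbit_iff]
      exact exists_smul_eq G ((1 : G) : G ⧸ H) b
  have hsum := MulAction.sum_card_fixedBy_eq_card_orbits_mul_card_group G β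
  rw [hΩ, one_mul] at hsum
  -- every element has a fixed point
  have key : ∀ a : G, 1 ≤ Fintype.card (fixedBy β a) := by
    intro a
    obtain ⟨x, hx⟩ := h a⁻¹
    refine Fintype.card_pos_iff.mpr ⟨⟨QuotientGroup.mk x⁻¹, ?_⟩⟩
    show a • (QuotientGroup.mk x⁻¹ : β) = QuotientGroup.mk x⁻¹
    show QuotientGroup.mk (a * x⁻¹) = QuotientGroup.mk x⁻¹
    refine QuotientGroup.eq.mpr ?_
    have : (a * x⁻¹)⁻¹ * x⁻¹ = (x * a * x⁻¹)⁻¹ := by group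
    rw [this]
    have hx' : x * a * x⁻¹ = (x * a⁻¹ * x⁻¹)⁻¹ := by group
    rw [hx']
    exact H.inv_mem (H.inv_mem hx)
  have hone : Fintype.card β ≤ Fintype.card (fixedBy β (1 : G)) := by
    refine Fintype.card_le_of_injective (fun b => ⟨b, one_smul G b⟩) ?_
    intro a b hab
    simpa using congrArg Subtype.val hab
  have herase := Finset.sum_erase_add Finset.univ
    (fun a : G => Fintype.card (fixedBy β a)) (Finset.mem_univ (1 : G))
  have hlow : (Finset.univ.erase (1 : G)).card ≤
      ∑ a ∈ Finset.univ.erase (1 : G), Fintype.card (fixedBy β a) := by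
    calc (Finset.univ.erase (1 : G)).card
        = ∑ _a ∈ Finset.univ.erase (1 : G), 1 := by simp
      _ ≤ _ := Finset.sum_le_sum (fun i _ => key i)
  have hcard : (Finset.univ.erase (1 : G)).card = Fintype.card G - 1 := by
    rw [Finset.card_erase_of_mem (Finset.mem_univ _), Finset.card_univ]
  have hGpos : 1 ≤ Fintype.card G := Fintype.card_pos
  have hβle : Fintype.card β ≤ 1 := by
    have h1 : (Fintype.card G - 1) + Fintype.card β ≤
        ∑ a : G, Fintype.card (fixedBy β a) := by
      rw [← herase]
      exact Nat.add_le_add (hcard ▸ hlow) hone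
    rw [hsum] at h1
    omega
  have hindex : H.index = 1 := by
    have h0 : H.index ≠ 0 := Subgroup.index_ne_zero_of_finite
    have : H.index = Nat.card β := Subgroup.index_eq_card H
    rw [this, Nat.card_eq_fintype_card] at h0 ⊢
    omega
  exact Subgroup.index_eq_one.mp hindex

/-- For a finite group `G` and a prime `p`, the prime `p` divides no conjugacy class size
of `G` if and only if `G` is an internal direct product `G = P × O_{p'}(G)`, where `P` is
an abelian Sylow `p`-subgroup of `G` and `O_{p'}(G)` is the largest normal subgroup of `G`
of order coprime to `p`. -/
theorem stmt_18 (G : Type*) [Group G] [Finite G] (p : ℕ) (hp : p.Prime) :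
    (∀ n ∈ csSet G, ¬ p ∣ n) ↔
    ∃ (P : Sylow p G) (N : Subgroup G),
      (∀ x ∈ (P : Subgroup G), ∀ y ∈ (P : Subgroup G), x * y = y * x) ∧
      N.Normal ∧ Nat.Coprime (Nat.card N) p ∧
      (∀ M : Subgroup G, M.Normal → Nat.Coprime (Nat.card M) p → M ≤ N) ∧
      ∃ e : (↥(P : Subgroup G) × ↥N) ≃* G, ∀ (x : ↥(P : Subgroup G)) (y : N),
        e (x, y) = (x : G) * y := by
  haveI := Fact.mk hp
  constructor
  · intro hcs
    obtain ⟨P⟩ : Nonempty (Sylow p G) := inferInstance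
    -- Step 1 : the centralizer of P is all of G, i.e. P is central
    have hC : Subgroup.centralizer ((P : Subgroup G) : Set G) = ⊤ := by
      apply aux_union_conj
      intro g
      set K := Subgroup.centralizer ({g} : Set G) with hK
      have hKi : ¬ p ∣ K.index := hcs _ ⟨g, rfl⟩
      obtain ⟨Q0⟩ : Nonempty (Sylow p K) := inferInstance
      set Q1 : Subgroup G := (Q0 : Subgroup K).map K.subtype with hQ1
      have hQ1K : Q1 ≤ K := Subgroup.map_subtype_le _
      have hrel : Q1.relIndex K = (Q0 : Subgroup K).index := by
        rw [Subgroup.relIndex, Subgroup.subgroupOf, hQ1,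
          Subgroup.comap_map_eq_self_of_injective K.subtype_injective]
      have hQ0i : ¬ p ∣ (Q0 : Subgroup K).index := Q0.not_dvd_index
      have hQ1i : ¬ p ∣ Q1.index := by
        rw [← Subgroup.relIndex_mul_index hQ1K, hrel]
        exact hp.prime.not_dvd_mul hQ0i hKi
      have hQ1p : IsPGroup p Q1 := Q0.2.map _
      let Q : Sylow p G := hQ1p.toSylow hQ1i
      obtain ⟨x, hx⟩ := MulAction.exists_smul_eq G P Q
      refine ⟨x⁻¹, ?_⟩
      rw [Subgroup.mem_centralizer_iff]
      intro m hm
      -- x • P = Q ≤ K, so x m x⁻¹ commutes with g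
      have hmem : x * m * x⁻¹ ∈ Q1 := by
        have h1 : (MulAut.conj x) m ∈ MulAut.conj x • (P : Subgroup G) :=
          Subgroup.smul_mem_pointwise_smul m (MulAut.conj x) _ hm
        rw [← Sylow.coe_subgroup_smul, hx] at h1
        have : ((Q : Subgroup G) : Set G) = Q1 := by
          simp only [Q, IsPGroup.toSylow_coe]
        have h1' : x * m * x⁻¹ ∈ (Q : Subgroup G) := by simpa [MulAut.conj_apply] using h1
        rwa [← SetLike.mem_coe, this, SetLike.mem_coe] at h1'
      have hcomm : g * (x * m * x⁻¹) = (x * m * x⁻¹) * g := by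
        have := hQ1K hmem
        rw [hK, Subgroup.mem_centralizer_iff] at this
        exact this g (Set.mem_singleton g)
      -- rearrange to m * (x⁻¹ g x) = (x⁻¹ g x) * m
      have : m * (x⁻¹ * g * x) = (x⁻¹ * g * x) * m := by
        have h2 := congrArg (fun t => x⁻¹ * t * x) hcomm
        simpa [mul_assoc] using h2.symm
      calc m * (x⁻¹ * g * x⁻¹⁻¹) = m * (x⁻¹ * g * x) := by rw [inv_inv]
        _ = (x⁻¹ * g * x) * m := this
        _ = (x⁻¹ * g * x⁻¹⁻¹) * m := by rw [inv_inv]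
    have hcen : ∀ m ∈ (P : Subgroup G), ∀ g : G, m * g = g * m := by
      intro m hm g
      have : g ∈ Subgroup.centralizer ((P : Subgroup G) : Set G) := by
        rw [hC]; trivial
      exact Subgroup.mem_centralizer_iff.mp this m hm
    -- Step 2 : Burnside's normal p-complement theorem
    have hP : Subgroup.normalizer (P : Set G) ≤ Subgroup.centralizer ((P : Subgroup G) : Set G) := by
      rw [hC]; exact le_top
    set N : Subgroup G := (MonoidHom.transferSylow P hP).ker with hN
    have hcompl : Subgroup.IsComplement' N P :=
      MonoidHom.ker_transferSylow_isComplement' P hP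
    have hNnormal : N.Normal := MonoidHom.normal_ker _
    have hNp : ¬ p ∣ Nat.card N := MonoidHom.not_dvd_card_ker_transferSylow P hP
    have hNcop : Nat.Coprime (Nat.card N) p :=
      (Nat.coprime_comm.mp ((Nat.Prime.coprime_iff_not_dvd hp).mpr hNp))
    have hNindex : N.index = Nat.card (P : Subgroup G) := hcompl.symm.index_eq_card
    obtain ⟨k, hk⟩ := IsPGroup.iff_card.mp P.2
    refine ⟨P, N, fun a ha b hb => hcen a ha b, hNnormal, hNcop, ?_, ?_⟩
    · -- maximality
      intro M hMnormal hMcop m hm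
      rw [← QuotientGroup.eq_one_iff (N := N) m, ← orderOf_eq_one_iff]
      have h1 : orderOf (QuotientGroup.mk m : G ⧸ N) ∣ Nat.card M := by
        refine dvd_trans (dvd_trans ?_ (orderOf_map_dvd M.subtype ⟨m, hm⟩))
          (orderOf_dvd_natCard _)
        exact orderOf_map_dvd (QuotientGroup.mk' N) m
      have h2 : orderOf (QuotientGroup.mk m : G ⧸ N) ∣ p ^ k := by
        have := orderOf_dvd_natCard (QuotientGroup.mk m : G ⧸ N)
        rwa [← Subgroup.index_eq_card, hNindex, hk] at this
      exact Nat.eq_one_of_dvd_one (Nat.dvd_gcd h2 h1 |>.trans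
        (Nat.Coprime.gcd_eq_one (Nat.Coprime.pow_left k hMcop.symm)).dvd)
    · -- the isomorphism
      have hcommute : ∀ (a : (P : Subgroup G)) (b : N),
          Commute ((P : Subgroup G).subtype a) (N.subtype b) := by
        intro a b
        exact (hcen (a : G) a.2 (b : G))
      refine ⟨MulEquiv.ofBijective
        (MonoidHom.noncommCoprod (P : Subgroup G).subtype N.subtype hcommute) ?_,
        fun a b => rfl⟩
      exact hcompl.symm
  · -- converse
    rintro ⟨P, N, habel, hNnormal, hNcop, hmax, e, he⟩
    -- P is central
    have hcen : ∀ m ∈ (P : Subgroup G), ∀ g : G, m * g = g * m := by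
      intro m hm g
      obtain ⟨⟨a, b⟩, rfl⟩ := e.surjective g
      rw [he a b]
      have hma : m * (a : G) = (a : G) * m := habel m hm a a.2
      have hmb : m * (b : G) = (b : G) * m := by
        have h1 : e ((⟨m, hm⟩ : (P : Subgroup G)), (1 : N)) = m := by
          rw [he]; simp
        have h2 : e ((1 : (P : Subgroup G)), b) = (b : G) := by
          rw [he]; simp
        have h3 : ((⟨m, hm⟩ : (P : Subgroup G)), (1 : N)) * ((1 : (P : Subgroup G)), b)
            = ((1 : (P : Subgroup G)), b) * ((⟨m, hm⟩ : (P : Subgroup G)), (1 : N)) := by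
          simp [Prod.ext_iff]
        have := congrArg e h3
        rwa [map_mul, map_mul, h1, h2] at this
      calc m * ((a : G) * b) = (a : G) * (m * b) := by
            rw [← mul_assoc, hma, mul_assoc]
        _ = (a : G) * b * m := by rw [hmb, mul_assoc]
    rintro n ⟨g, rfl⟩
    have hle : (P : Subgroup G) ≤ Subgroup.centralizer {g} := by
      intro m hm
      rw [Subgroup.mem_centralizer_iff]
      intro h hh
      rw [Set.mem_singleton_iff] at hh
      subst hh
      exact (hcen m hm h).symm
    intro hdvd
    exact P.not_dvd_index (hdvd.trans (Subgroup.index_dvd_of_le hle))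
end
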